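/- arXiv:2501.01627 — 6 statements merged into one kernel-verified Lean document; each statement's English description precedes it below -/
import Mathlib

section
/- Let f = h + conj(g) be a harmonic function in the unit disk 𝔻 (h, g analytic in 𝔻, g(0)=0) such that Im h(z) ≠ 0 for all z ∈ 𝔻. If f ∈ h¹, then the analytic function F = h + g belongs to the Hardy space H¹. -/
open Complex Real Set

noncomputable section

/-- The open unit disk in the complex plane. -/
def unitDisk : Set ℂ := Metric.ball 0 1

/-- The integral mean `M_p(r, f)` of a complex-valued function `f`. -/
def circleMean (p : ℝ) (f : ℂ → ℂ) (r : ℝ) : ℝ :=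
  ((1 / (2 * π)) *
    ∫ θ in (0:ℝ)..(2 * π), ‖f (r * Complex.exp (θ * Complex.I))‖ ^ p) ^ (1 / p)

/-- Membership in the (harmonic/analytic) Hardy space of exponent `p`. -/
def InHardy (p : ℝ) (f : ℂ → ℂ) : Prop :=
  ∃ C : ℝ, ∀ r : ℝ, 0 < r → r < 1 → circleMean p f r ≤ C

lemma meanval_im (h : ℂ → ℂ) (hh : DifferentiableOn ℂ h unitDisk) {r : ℝ}
    (hr0 : 0 < r) (hr1 : r < 1) :
    ∫ θ in (0:ℝ)..(2 * π), (h ((r : ℂ) * Complex.exp (θ * Complex.I))).im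
      = 2 * π * (h 0).im := by
  have hsub : Metric.closedBall (0:ℂ) r ⊆ unitDisk :=
    Metric.closedBall_subset_ball (by linarith)
  have key := (hh.mono hsub).circleIntegral_sub_inv_smul (Metric.mem_ball_self hr0)
  rw [circleIntegral] at key
  have hmemθ : ∀ θ : ℝ, circleMap 0 r θ ∈ unitDisk := fun θ =>
    hsub (circleMap_mem_closedBall 0 hr0.le θ)
  have hcont : Continuous fun θ : ℝ => h (circleMap 0 r θ) :=
    hh.continuousOn.comp_continuous (continuous_circleMap 0 r) hmemθ
  have hint : IntervalIntegrable (fun θ : ℝ => h (circleMap 0 r θ))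
      MeasureTheory.volume 0 (2 * π) := hcont.intervalIntegrable _ _
  have heq : (∫ θ in (0:ℝ)..(2 * π),
        deriv (circleMap 0 r) θ • ((circleMap 0 r θ - 0)⁻¹ • h (circleMap 0 r θ)))
      = Complex.I * ∫ θ in (0:ℝ)..(2 * π), h (circleMap 0 r θ) := by
    rw [← intervalIntegral.integral_const_mul]
    refine intervalIntegral.integral_congr fun θ _ => ?_
    have hne : circleMap 0 r θ ≠ 0 := circleMap_ne_center hr0.ne'
    rw [deriv_circleMap]
    field_simp
    simp only [smul_eq_mul, sub_zero, one_div]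
    rw [mul_comm (circleMap 0 r θ) I, mul_assoc, ← mul_assoc (circleMap 0 r θ),
      mul_inv_cancel₀ hne, one_mul]
  rw [heq] at key
  have key2 : (∫ θ in (0:ℝ)..(2 * π), h (circleMap 0 r θ)) = 2 * π * h 0 := by
    have hI : (Complex.I : ℂ) ≠ 0 := Complex.I_ne_zero
    apply mul_left_cancel₀ hI
    rw [key]
    simp [smul_eq_mul]
    ring
  have him : (∫ θ in (0:ℝ)..(2 * π), (h (circleMap 0 r θ)).im)
      = ((∫ θ in (0:ℝ)..(2 * π), h (circleMap 0 r θ)) : ℂ).im := by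
    have := Complex.imCLM.intervalIntegral_comp_comm hint
    simpa using this
  have hcm : ∀ θ : ℝ, circleMap 0 r θ = (r : ℂ) * Complex.exp (θ * Complex.I) := by
    intro θ; simp [circleMap]
  calc (∫ θ in (0:ℝ)..(2 * π), (h ((r : ℂ) * Complex.exp (θ * Complex.I))).im)
      = ∫ θ in (0:ℝ)..(2 * π), (h (circleMap 0 r θ)).im := by
        refine intervalIntegral.integral_congr fun θ _ => ?_
        rw [hcm]
    _ = ((∫ θ in (0:ℝ)..(2 * π), h (circleMap 0 r θ)) : ℂ).im := him
    _ = 2 * π * (h 0).im := by rw [key2]; simp [Complex.mul_im]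

/-- Lemma 2.1: if `f = h + conj g ∈ h¹` and `Im h` is non-vanishing, then `F = h + g ∈ H¹`. -/
theorem lemma_F_in_H1 (h g f : ℂ → ℂ)
    (hh : DifferentiableOn ℂ h unitDisk) (hg : DifferentiableOn ℂ g unitDisk)
    (hg0 : g 0 = 0)
    (hf : ∀ z ∈ unitDisk, f z = h z + (starRingEnd ℂ) (g z))
    (him : ∀ z ∈ unitDisk, (h z).im ≠ 0)
    (hf1 : InHardy 1 f) :
    InHardy 1 (fun z => h z + g z) := by
  obtain ⟨C, hC⟩ := hf1
  -- constant sign of Im h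
  have h0mem : (0:ℂ) ∈ unitDisk := Metric.mem_ball_self one_pos
  set ε : ℝ := if 0 < (h 0).im then 1 else -1 with hε
  have hsign : ∀ z ∈ unitDisk, |(h z).im| = ε * (h z).im := by
    have hpre : IsPreconnected ((fun z => (h z).im) '' unitDisk) :=
      ((convex_ball (0:ℂ) 1).isPreconnected).image _
        (Complex.continuous_im.comp_continuousOn hh.continuousOn)
    have h0S : (h 0).im ∈ (fun z => (h z).im) '' unitDisk := ⟨0, h0mem, rfl⟩
    intro z hz
    have hzS : (h z).im ∈ (fun z => (h z).im) '' unitDisk := ⟨z, hz, rfl⟩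
    have hnot : (0:ℝ) ∉ (fun z => (h z).im) '' unitDisk := by
      rintro ⟨w, hw, hw0⟩; exact him w hw hw0
    rcases lt_or_gt_of_ne (him 0 h0mem) with h0neg | h0pos
    · have hzneg : (h z).im < 0 := by
        rcases lt_or_gt_of_ne (him z hz) with hneg | hpos
        · exact hneg
        · exact absurd (hpre.Icc_subset h0S hzS ⟨h0neg.le, hpos.le⟩) hnot
      rw [hε, if_neg (by linarith), abs_of_neg hzneg]; ring
    · have hzpos : 0 < (h z).im := by
        rcases lt_or_gt_of_ne (him z hz) with hneg | hpos
        · exact absurd (hpre.Icc_subset hzS h0S ⟨hneg.le, h0pos.le⟩) hnot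
        · exact hpos
      rw [hε, if_pos h0pos, abs_of_pos hzpos]; ring
  refine ⟨3 * C + 2 * |(h 0).im|, fun r hr0 hr1 => ?_⟩
  set c : ℝ → ℂ := fun θ => (r : ℂ) * Complex.exp (θ * Complex.I) with hcdef
  have hmemθ : ∀ θ : ℝ, c θ ∈ unitDisk := by
    intro θ
    simp only [unitDisk, Metric.mem_ball, dist_zero_right, hcdef, norm_mul]
    rw [Complex.norm_real, Real.norm_eq_abs,
      Complex.norm_exp_ofReal_mul_I]
    rw [abs_of_pos hr0]; linarith
  have hcont_c : Continuous c := by fun_prop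
  have hch : Continuous fun θ => h (c θ) :=
    hh.continuousOn.comp_continuous hcont_c hmemθ
  have hcg : Continuous fun θ => g (c θ) :=
    hg.continuousOn.comp_continuous hcont_c hmemθ
  have hcf : Continuous fun θ => f (c θ) := by
    have : (fun θ => f (c θ)) = fun θ => h (c θ) + (starRingEnd ℂ) (g (c θ)) := by
      funext θ; exact hf (c θ) (hmemθ θ)
    rw [this]; exact hch.add (Complex.continuous_conj.comp hcg)
  -- pointwise bound
  have hbd : ∀ θ : ℝ, ‖h (c θ) + g (c θ)‖ ≤ 3 * ‖f (c θ)‖ + 2 * |(h (c θ)).im| := by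
    intro θ
    set z := c θ with hzdef
    have hz : z ∈ unitDisk := hmemθ θ
    have e1 : h z + g z = f z + (g z - (starRingEnd ℂ) (g z)) := by
      rw [hf z hz]; ring
    have e2 : ‖g z - (starRingEnd ℂ) (g z)‖ = 2 * |(g z).im| := by
      rw [Complex.sub_conj]
      simp [abs_mul]
    have e3 : (g z).im = (h z).im - (f z).im := by
      rw [hf z hz]; simp
    have e4 : |(f z).im| ≤ ‖f z‖ := by
      exact Complex.abs_im_le_norm _
    have e5 : |(g z).im| ≤ |(h z).im| + |(f z).im| := by
      rw [e3]; exact abs_sub _ _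
    calc ‖h z + g z‖ ≤ ‖f z‖ + ‖g z - (starRingEnd ℂ) (g z)‖ := by
          rw [e1]; exact norm_add_le _ _
      _ = ‖f z‖ + 2 * |(g z).im| := by rw [e2]
      _ ≤ ‖f z‖ + 2 * (|(h z).im| + |(f z).im|) := by linarith
      _ ≤ 3 * ‖f z‖ + 2 * |(h z).im| := by linarith [e4]
  -- integrability
  have iF : IntervalIntegrable (fun θ => ‖h (c θ) + g (c θ)‖) MeasureTheory.volume 0 (2 * π) :=
    ((hch.add hcg).norm).intervalIntegrable _ _
  have iRHS : IntervalIntegrable (fun θ => 3 * ‖f (c θ)‖ + 2 * |(h (c θ)).im|)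
      MeasureTheory.volume 0 (2 * π) := by
    apply IntervalIntegrable.add
    · exact (continuous_const.mul hcf.norm).intervalIntegrable _ _
    · exact (continuous_const.mul ((Complex.continuous_im.comp hch).abs)).intervalIntegrable _ _
  have if1 : IntervalIntegrable (fun θ => ‖f (c θ)‖) MeasureTheory.volume 0 (2 * π) :=
    hcf.norm.intervalIntegrable _ _
  have ih1 : IntervalIntegrable (fun θ => |(h (c θ)).im|) MeasureTheory.volume 0 (2 * π) :=
    ((Complex.continuous_im.comp hch).abs).intervalIntegrable _ _
  have h2pi : (0:ℝ) ≤ 2 * π := by positivity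
  -- integral of |Im h|
  have himh : (∫ θ in (0:ℝ)..(2 * π), |(h (c θ)).im|) = 2 * π * |(h 0).im| := by
    have e1 : (∫ θ in (0:ℝ)..(2 * π), |(h (c θ)).im|)
        = ∫ θ in (0:ℝ)..(2 * π), ε * (h (c θ)).im := by
      refine intervalIntegral.integral_congr fun θ _ => hsign _ (hmemθ θ)
    rw [e1, intervalIntegral.integral_const_mul, meanval_im h hh hr0 hr1]
    have := hsign 0 h0mem
    nlinarith [this]
  have hineq : (∫ θ in (0:ℝ)..(2 * π), ‖h (c θ) + g (c θ)‖)
      ≤ 3 * (∫ θ in (0:ℝ)..(2 * π), ‖f (c θ)‖) + 2 * (2 * π * |(h 0).im|) := by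
    calc (∫ θ in (0:ℝ)..(2 * π), ‖h (c θ) + g (c θ)‖)
        ≤ ∫ θ in (0:ℝ)..(2 * π), (3 * ‖f (c θ)‖ + 2 * |(h (c θ)).im|) :=
          intervalIntegral.integral_mono_on h2pi iF iRHS (fun θ _ => hbd θ)
      _ = 3 * (∫ θ in (0:ℝ)..(2 * π), ‖f (c θ)‖) + 2 * (∫ θ in (0:ℝ)..(2 * π), |(h (c θ)).im|) := by
          rw [intervalIntegral.integral_add ((if1.const_mul 3)) ((ih1.const_mul 2)),
            intervalIntegral.integral_const_mul, intervalIntegral.integral_const_mul]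
      _ = 3 * (∫ θ in (0:ℝ)..(2 * π), ‖f (c θ)‖) + 2 * (2 * π * |(h 0).im|) := by rw [himh]
  -- unfold circleMean
  have hπ : (0:ℝ) < π := Real.pi_pos
  have hcmF : circleMean 1 (fun z => h z + g z) r
      = (1 / (2 * π)) * ∫ θ in (0:ℝ)..(2 * π), ‖h (c θ) + g (c θ)‖ := by
    simp [circleMean, Real.rpow_one, hcdef]
  have hcmf : circleMean 1 f r = (1 / (2 * π)) * ∫ θ in (0:ℝ)..(2 * π), ‖f (c θ)‖ := by
    simp [circleMean, Real.rpow_one, hcdef]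
  have hCf := hC r hr0 hr1
  rw [hcmf] at hCf
  rw [hcmF]
  have h2pi' : (0:ℝ) < 2 * π := by positivity
  rw [div_mul_eq_mul_div, div_le_iff₀ h2pi'] at *
  nlinarith [hineq, abs_nonneg ((h 0).im), hCf]
end
end

section
/- Let f = h + conj(g) be a harmonic function in the unit disk 𝔻 with h, g analytic in 𝔻 (no normalization of g(0) assumed), and suppose that either Im h is non-vanishing in 𝔻 or Im g is non-vanishing in 𝔻. If f ∈ h¹, then the analytic function F = h + g belongs to the Hardy space H¹. -/
open Complex Real Set

noncomputable section

lemma circle_mem_unitDisk {r : ℝ} (h0 : 0 ≤ r) (h1 : r < 1) (θ : ℝ) :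
    (r : ℂ) * Complex.exp (θ * Complex.I) ∈ unitDisk := by
  simp only [unitDisk, Metric.mem_ball, dist_zero_right, norm_mul,
    Complex.norm_exp_ofReal_mul_I, mul_one, Complex.norm_real, Real.norm_eq_abs,
    _root_.abs_of_nonneg h0]
  exact h1

lemma cont_circle {q : ℂ → ℂ} (hq : DifferentiableOn ℂ q unitDisk) {r : ℝ}
    (h0 : 0 ≤ r) (h1 : r < 1) :
    Continuous (fun θ : ℝ => q ((r : ℂ) * Complex.exp (θ * Complex.I))) := by
  apply hq.continuousOn.comp_continuous
  · fun_prop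
  · exact circle_mem_unitDisk h0 h1

/-- Mean value property from the Cauchy integral formula. -/
lemma mean_value {q : ℂ → ℂ} (hq : DifferentiableOn ℂ q unitDisk) {r : ℝ}
    (h0 : 0 < r) (h1 : r < 1) :
    ∫ θ in (0:ℝ)..(2 * π), q ((r : ℂ) * Complex.exp (θ * Complex.I))
      = 2 * (π : ℂ) * q 0 := by
  have hsub : Metric.closedBall (0:ℂ) r ⊆ unitDisk := by
    intro z hz
    simp only [Metric.mem_closedBall, dist_zero_right] at hz
    simp only [unitDisk, Metric.mem_ball, dist_zero_right]
    linarith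
  have hkey := (hq.mono hsub).circleIntegral_sub_inv_smul (c := 0) (w := 0)
    (Metric.mem_ball_self h0)
  rw [circleIntegral] at hkey
  simp only [deriv_circleMap, smul_eq_mul, sub_zero] at hkey
  have hcongr : ∀ θ ∈ uIcc (0:ℝ) (2 * π),
      circleMap 0 r θ * Complex.I * ((circleMap 0 r θ)⁻¹ * q (circleMap 0 r θ))
        = Complex.I * q (circleMap 0 r θ) := by
    intro θ _
    have hne : circleMap 0 r θ ≠ 0 := circleMap_ne_center (ne_of_gt h0)
    field_simp
  rw [intervalIntegral.integral_congr hcongr, intervalIntegral.integral_const_mul] at hkey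
  have hI : (Complex.I : ℂ) ≠ 0 := Complex.I_ne_zero
  have : Complex.I * ∫ θ in (0:ℝ)..(2 * π), q (circleMap 0 r θ)
      = Complex.I * (2 * (π : ℂ) * q 0) := by
    rw [hkey]; ring
  have := mul_left_cancel₀ hI this
  simpa only [circleMap_zero] using this

lemma im_integral {q : ℂ → ℂ} (hq : DifferentiableOn ℂ q unitDisk) {r : ℝ}
    (h0 : 0 < r) (h1 : r < 1) :
    ∫ θ in (0:ℝ)..(2 * π), (q ((r : ℂ) * Complex.exp (θ * Complex.I))).im
      = 2 * π * (q 0).im := by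
  have hcont := cont_circle hq h0.le h1
  have h2π : (0:ℝ) ≤ 2 * π := by positivity
  have := mean_value hq h0 h1
  have him : (∫ θ in (0:ℝ)..(2 * π), q ((r : ℂ) * Complex.exp (θ * Complex.I))).im
      = ∫ θ in (0:ℝ)..(2 * π), (q ((r : ℂ) * Complex.exp (θ * Complex.I))).im := by
    rw [intervalIntegral.integral_of_le h2π, intervalIntegral.integral_of_le h2π]
    have hint : MeasureTheory.IntegrableOn
        (fun θ : ℝ => q ((r : ℂ) * Complex.exp (θ * Complex.I)))
        (Set.Ioc (0:ℝ) (2 * π)) MeasureTheory.volume := hcont.integrableOn_Ioc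
    have := (_root_.integral_im (𝕜 := ℂ) hint).symm
    simpa using this
  rw [← him, this]
  simp

/-- A continuous non-vanishing real part on the disk has constant sign. -/
lemma sign_const {q : ℂ → ℂ} (hq : DifferentiableOn ℂ q unitDisk)
    (hz : ∀ z ∈ unitDisk, (q z).im ≠ 0) :
    ∃ ε : ℝ, (ε = 1 ∨ ε = -1) ∧ ∀ z ∈ unitDisk, |(q z).im| = ε * (q z).im := by
  have hconn : IsPreconnected ((fun z => (q z).im) '' unitDisk) := by
    apply IsPreconnected.image
    · exact (convex_ball (0:ℂ) 1).isPreconnected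
    · exact Complex.continuous_im.comp_continuousOn hq.continuousOn
  have h0 : (0:ℝ) ∉ (fun z => (q z).im) '' unitDisk := by
    rintro ⟨z, hzmem, hz0⟩
    exact hz z hzmem hz0
  by_cases hpos : ∀ z ∈ unitDisk, 0 < (q z).im
  · exact ⟨1, Or.inl rfl, fun z hzm => by rw [one_mul, abs_of_pos (hpos z hzm)]⟩
  · push_neg at hpos
    obtain ⟨z₀, hz₀m, hz₀⟩ := hpos
    have hz₀' : (q z₀).im < 0 := lt_of_le_of_ne hz₀ (hz z₀ hz₀m)
    refine ⟨-1, Or.inr rfl, fun z hzm => ?_⟩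
    have hneg : (q z).im < 0 := by
      by_contra hc
      push_neg at hc
      have hzpos : 0 < (q z).im := lt_of_le_of_ne hc (Ne.symm (hz z hzm))
      have : (0:ℝ) ∈ (fun z => (q z).im) '' unitDisk := by
        apply hconn.Icc_subset ⟨z₀, hz₀m, rfl⟩ ⟨z, hzm, rfl⟩
        exact ⟨hz₀'.le, hzpos.le⟩
      exact h0 this
    rw [abs_of_neg hneg]; ring

/-- Lemma 2.1 without the normalization `g(0) = 0`: if `Im h` or `Im g` is non-vanishing
and `f = h + conj g ∈ h¹`, then `F = h + g ∈ H¹`. -/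
theorem lemma_F_in_H1' (h g f : ℂ → ℂ)
    (hh : DifferentiableOn ℂ h unitDisk) (hg : DifferentiableOn ℂ g unitDisk)
    (hf : ∀ z ∈ unitDisk, f z = h z + (starRingEnd ℂ) (g z))
    (him : (∀ z ∈ unitDisk, (h z).im ≠ 0) ∨ (∀ z ∈ unitDisk, (g z).im ≠ 0))
    (hf1 : InHardy 1 f) :
    InHardy 1 (fun z => h z + g z) := by
  -- choose the non-vanishing function q and the key pointwise bound
  obtain ⟨q, hq, hqim, hbound⟩ :
      ∃ q : ℂ → ℂ, DifferentiableOn ℂ q unitDisk ∧ (∀ z ∈ unitDisk, (q z).im ≠ 0) ∧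
        ∀ z ∈ unitDisk, ‖h z + g z‖ ≤ ‖h z + (starRingEnd ℂ) (g z)‖ + 2 * |(q z).im| := by
    rcases him with himh | himg
    · refine ⟨h, hh, himh, fun z hzm => ?_⟩
      have key : h z + g z = (h z - (starRingEnd ℂ) (h z))
          + (starRingEnd ℂ) (h z + (starRingEnd ℂ) (g z)) := by
        simp only [map_add, RingHomCompTriple.comp_apply, RingHom.id_apply,
          Complex.conj_conj]
        ring
      calc ‖h z + g z‖
          ≤ ‖h z - (starRingEnd ℂ) (h z)‖ + ‖(starRingEnd ℂ) (h z + (starRingEnd ℂ) (g z))‖ := by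
            rw [key]; exact norm_add_le _ _
        _ = ‖h z + (starRingEnd ℂ) (g z)‖ + 2 * |(h z).im| := by
            rw [Complex.sub_conj, RCLike.norm_conj]
            simp only [norm_mul, Complex.norm_real, Complex.norm_I, mul_one,
              Real.norm_eq_abs, abs_mul]
            rw [_root_.abs_of_nonneg (by norm_num : (0:ℝ) ≤ 2)]
            try ring
    · refine ⟨g, hg, himg, fun z hzm => ?_⟩
      have key : h z + g z = (h z + (starRingEnd ℂ) (g z))
          + (g z - (starRingEnd ℂ) (g z)) := by ring
      calc ‖h z + g z‖
          ≤ ‖h z + (starRingEnd ℂ) (g z)‖ + ‖g z - (starRingEnd ℂ) (g z)‖ := by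
            rw [key]; exact norm_add_le _ _
        _ = ‖h z + (starRingEnd ℂ) (g z)‖ + 2 * |(g z).im| := by
            rw [Complex.sub_conj]
            simp only [norm_mul, Complex.norm_real, Complex.norm_I, mul_one,
              Real.norm_eq_abs, abs_mul]
            rw [_root_.abs_of_nonneg (by norm_num : (0:ℝ) ≤ 2)]
            try ring
  obtain ⟨ε, hε, hsign⟩ := sign_const hq hqim
  obtain ⟨C, hC⟩ := hf1
  refine ⟨C + 2 * |(q 0).im|, fun r h0 h1 => ?_⟩
  have h2π : (0:ℝ) < 2 * π := by positivity
  set c : ℝ → ℂ := fun θ => (r : ℂ) * Complex.exp (θ * Complex.I) with hc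
  have hmem : ∀ θ : ℝ, c θ ∈ unitDisk := circle_mem_unitDisk h0.le h1
  -- continuity of everything on the circle
  have conth := cont_circle hh h0.le h1
  have contg := cont_circle hg h0.le h1
  have contq := cont_circle hq h0.le h1
  have contF : Continuous fun θ : ℝ => ‖h (c θ) + g (c θ)‖ := (conth.add contg).norm
  have contf : Continuous fun θ : ℝ => ‖h (c θ) + (starRingEnd ℂ) (g (c θ))‖ :=
    (conth.add (Complex.continuous_conj.comp contg)).norm
  have contqi : Continuous fun θ : ℝ => |(q (c θ)).im| :=
    (Complex.continuous_im.comp contq).abs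
  -- the integral of |Im q| on the circle
  have hqint : ∫ θ in (0:ℝ)..(2 * π), |(q (c θ)).im| = 2 * π * |(q 0).im| := by
    have e1 : ∀ θ ∈ uIcc (0:ℝ) (2 * π), |(q (c θ)).im| = ε * (q (c θ)).im := by
      intro θ _; exact hsign _ (hmem θ)
    rw [intervalIntegral.integral_congr e1, intervalIntegral.integral_const_mul,
      im_integral hq h0 h1]
    have : |(q 0).im| = ε * (q 0).im :=
      hsign 0 (by simp [unitDisk])
    rw [this]; ring
  -- compare the two circle means
  have hfr := hC r h0 h1
  have hmean : ∀ (u : ℂ → ℂ), circleMean 1 u r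
      = (1 / (2 * π)) * ∫ θ in (0:ℝ)..(2 * π), ‖u (c θ)‖ := by
    intro u
    simp only [circleMean, Real.rpow_one, one_div_one, hc]
  rw [hmean] at hfr ⊢
  have hfeq : ∫ θ in (0:ℝ)..(2 * π), ‖f (c θ)‖
      = ∫ θ in (0:ℝ)..(2 * π), ‖h (c θ) + (starRingEnd ℂ) (g (c θ))‖ := by
    apply intervalIntegral.integral_congr
    intro θ _
    show ‖f (c θ)‖ = ‖h (c θ) + (starRingEnd ℂ) (g (c θ))‖
    rw [hf _ (hmem θ)]
  rw [hfeq] at hfr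
  have hintle : ∫ θ in (0:ℝ)..(2 * π), ‖h (c θ) + g (c θ)‖
      ≤ (∫ θ in (0:ℝ)..(2 * π), ‖h (c θ) + (starRingEnd ℂ) (g (c θ))‖)
        + 2 * (2 * π * |(q 0).im|) := by
    have step : ∫ θ in (0:ℝ)..(2 * π), ‖h (c θ) + g (c θ)‖
        ≤ ∫ θ in (0:ℝ)..(2 * π),
            (‖h (c θ) + (starRingEnd ℂ) (g (c θ))‖ + 2 * |(q (c θ)).im|) := by
      apply intervalIntegral.integral_mono_on h2π.le
        (contF.intervalIntegrable _ _)
        ((contf.add (continuous_const.mul contqi)).intervalIntegrable _ _)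
      intro θ _
      exact hbound _ (hmem θ)
    calc ∫ θ in (0:ℝ)..(2 * π), ‖h (c θ) + g (c θ)‖
        ≤ _ := step
      _ = (∫ θ in (0:ℝ)..(2 * π), ‖h (c θ) + (starRingEnd ℂ) (g (c θ))‖)
          + 2 * (2 * π * |(q 0).im|) := by
          rw [intervalIntegral.integral_add (g := fun θ : ℝ => 2 * |(q (c θ)).im|) (contf.intervalIntegrable _ _)
            ((continuous_const.mul contqi).intervalIntegrable _ _),
            intervalIntegral.integral_const_mul, hqint]
  calc (1 / (2 * π)) * ∫ θ in (0:ℝ)..(2 * π), ‖h (c θ) + g (c θ)‖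
      ≤ (1 / (2 * π)) * ((∫ θ in (0:ℝ)..(2 * π), ‖h (c θ) + (starRingEnd ℂ) (g (c θ))‖)
        + 2 * (2 * π * |(q 0).im|)) := by
        apply mul_le_mul_of_nonneg_left hintle (by positivity)
    _ = (1 / (2 * π)) * (∫ θ in (0:ℝ)..(2 * π), ‖h (c θ) + (starRingEnd ℂ) (g (c θ))‖)
        + 2 * |(q 0).im| := by
        field_simp
    _ ≤ C + 2 * |(q 0).im| := by linarith
end
end

section
/- Let f = h + conj(g) be a harmonic function in the unit disk 𝔻 with Taylor expansions h(z) = Σ_{n≥0} a_n zⁿ and g(z) = Σ_{n≥0} b_n zⁿ (where b₀ = 0). If f ∈ h¹, then for every p with 0 < p < 1, Σ_{n≥0} (n+1)^{p−2} (|a_n|^p + |b_n|^p) < ∞. -/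
open Complex Real Set
open MeasureTheory

noncomputable section

lemma orth (k : ℤ) : (∫ θ in (0:ℝ)..(2*π), Complex.exp ((k:ℂ) * θ * Complex.I))
    = if k = 0 then (2*π : ℂ) else 0 := by
  rcases eq_or_ne k 0 with hk | hk
  · simp [hk, intervalIntegral.integral_const, Complex.real_smul]
  · rw [if_neg hk]
    have h1 : ∀ θ : ℝ, (k:ℂ) * θ * Complex.I = ((k:ℂ) * Complex.I) * θ := by
      intro θ; ring
    simp_rw [h1]
    rw [integral_exp_mul_complex (by simp [hk, Complex.I_ne_zero])]
    have : (k:ℂ) * Complex.I * ((2*π : ℝ):ℂ) = (k:ℂ) * (2 * π * Complex.I) := by push_cast; ring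
    rw [this, Complex.exp_int_mul_two_pi_mul_I]
    simp

lemma swap_sum (c : ℕ → ℂ) (hc : Summable fun m => ‖c m‖) (k : ℕ → ℤ) :
    (∫ θ in (0:ℝ)..(2*π), ∑' m, c m * Complex.exp ((k m : ℂ) * θ * Complex.I))
      = ∑' m, c m * (if k m = 0 then (2*π:ℂ) else 0) := by
  have hint : ∀ m : ℕ, Integrable (fun θ : ℝ => c m * Complex.exp ((k m : ℂ) * θ * Complex.I))
      (volume.restrict (Ioc (0:ℝ) (2*π))) := by
    intro m
    apply Continuous.integrableOn_Ioc
    exact continuous_const.mul (Complex.continuous_exp.comp (by continuity))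
  have hnorm : ∀ (m : ℕ) (θ : ℝ), ‖c m * Complex.exp ((k m : ℂ) * θ * Complex.I)‖ = ‖c m‖ := by
    intro m θ
    rw [norm_mul]
    have : ((k m : ℂ) * θ * Complex.I).re = 0 := by simp
    rw [Complex.norm_exp, this, Real.exp_zero, mul_one]
  have hsum : Summable fun m : ℕ =>
      ∫ θ in Ioc (0:ℝ) (2*π), ‖c m * Complex.exp ((k m : ℂ) * θ * Complex.I)‖ := by
    have : ∀ m : ℕ, (∫ θ in Ioc (0:ℝ) (2*π), ‖c m * Complex.exp ((k m : ℂ) * θ * Complex.I)‖)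
        = (2*π) * ‖c m‖ := by
      intro m
      simp_rw [hnorm m]
      rw [setIntegral_const]
      simp [Real.volume_Ioc, Real.two_pi_pos.le, smul_eq_mul]
    simp_rw [this]
    exact hc.mul_left _
  rw [intervalIntegral.integral_of_le Real.two_pi_pos.le,
    ← MeasureTheory.integral_tsum_of_summable_integral_norm hint hsum]
  congr 1
  funext m
  rw [MeasureTheory.integral_const_mul, ← intervalIntegral.integral_of_le Real.two_pi_pos.le,
    orth]

lemma extract (G : ℝ → ℂ) (c : ℕ → ℂ) (k : ℕ → ℤ)
    (hG : ∀ θ : ℝ, HasSum (fun m => c m * Complex.exp ((k m : ℂ) * θ * Complex.I)) (G θ))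
    (hc : Summable fun m => ‖c m‖) :
    (∫ θ in (0:ℝ)..(2*π), G θ) = ∑' m, c m * (if k m = 0 then (2*π:ℂ) else 0) := by
  have hG' : G = fun θ : ℝ => ∑' m, c m * Complex.exp ((k m : ℂ) * θ * Complex.I) :=
    funext fun θ => (hG θ).tsum_eq.symm
  rw [hG', swap_sum c hc k]

lemma geom_bound {c : ℕ → ℂ} {r ρ : ℝ} (h0 : 0 ≤ r) (hrρ : r < ρ)
    (hs : Summable fun m => c m * (ρ:ℂ)^m) :
    Summable fun m => ‖c m‖ * r^m := by
  have hρ : 0 < ρ := lt_of_le_of_lt h0 hrρ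
  obtain ⟨M, hM⟩ := (hs.tendsto_atTop_zero.norm.bddAbove_range)
  have hMle : ∀ m : ℕ, ‖c m‖ * ρ ^ m ≤ M := by
    intro m
    have := hM (Set.mem_range_self m)
    simpa [norm_mul, abs_of_pos hρ] using this
  have hgeom : Summable fun m : ℕ => M * (r/ρ)^m := by
    apply Summable.mul_left
    exact summable_geometric_of_lt_one (div_nonneg h0 hρ.le) ((div_lt_one hρ).2 hrρ)
  apply Summable.of_nonneg_of_le (fun m => mul_nonneg (norm_nonneg _) (pow_nonneg h0 _)) _ hgeom
  intro m
  have hr : r ^ m = ρ ^ m * (r/ρ)^m := by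
    rw [← mul_pow, mul_div_cancel₀ _ hρ.ne']
  calc ‖c m‖ * r ^ m = (‖c m‖ * ρ ^ m) * (r/ρ)^m := by rw [hr]; ring
    _ ≤ M * (r/ρ)^m := by
        apply mul_le_mul_of_nonneg_right (hMle m)
        positivity

lemma zmem {r : ℝ} (hr0 : 0 < r) (hr1 : r < 1) (θ : ℝ) :
    (r:ℂ) * Complex.exp (θ * Complex.I) ∈ unitDisk := by
  simp only [unitDisk, Metric.mem_ball, Complex.dist_eq, sub_zero]
  rw [norm_mul, Complex.norm_exp]
  simp [abs_of_pos hr0, hr1]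

lemma coeff_summable {c : ℕ → ℂ} {u : ℂ → ℂ}
    (hu : ∀ z ∈ unitDisk, HasSum (fun m : ℕ => c m * z ^ m) (u z))
    {r : ℝ} (hr0 : 0 < r) (hr1 : r < 1) :
    Summable fun m => ‖c m‖ * r ^ m := by
  set ρ : ℝ := (1 + r) / 2 with hρdef
  have hrρ : r < ρ := by rw [hρdef]; linarith
  have hρ1 : ρ < 1 := by rw [hρdef]; linarith
  have hρ0 : 0 < ρ := lt_trans hr0 hrρ
  have hmem : ((ρ:ℝ):ℂ) ∈ unitDisk := by
    simp only [unitDisk, Metric.mem_ball, Complex.dist_eq, sub_zero]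
    rw [Complex.norm_real, Real.norm_eq_abs, abs_of_pos hρ0]; exact hρ1
  exact geom_bound hr0.le hrρ (hu _ hmem).summable

lemma hasSum_circle {c : ℕ → ℂ} {u : ℂ → ℂ}
    (hu : ∀ z ∈ unitDisk, HasSum (fun m : ℕ => c m * z ^ m) (u z))
    {r : ℝ} (hr0 : 0 < r) (hr1 : r < 1) (s : ℤ) (θ : ℝ) :
    HasSum (fun m : ℕ => (c m * (r:ℂ)^m) *
        Complex.exp (((((m:ℤ) + s : ℤ)):ℂ) * θ * Complex.I))
      (u ((r:ℂ) * Complex.exp (θ * Complex.I)) * Complex.exp ((s:ℂ) * θ * Complex.I)) := by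
  have H := (hu _ (zmem hr0 hr1 θ)).mul_right (Complex.exp ((s:ℂ) * θ * Complex.I))
  have hfe : (fun m : ℕ => c m * ((r:ℂ) * Complex.exp (θ * Complex.I)) ^ m *
      Complex.exp ((s:ℂ) * θ * Complex.I))
      = fun m : ℕ => (c m * (r:ℂ)^m) *
        Complex.exp (((((m:ℤ) + s : ℤ)):ℂ) * θ * Complex.I) := by
    funext m
    have e1 : Complex.exp ((m:ℂ) * (θ * Complex.I)) * Complex.exp ((s:ℂ) * θ * Complex.I)
        = Complex.exp (((((m:ℤ) + s : ℤ)):ℂ) * θ * Complex.I) := by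
      rw [← Complex.exp_add]; congr 1; push_cast; ring
    calc c m * ((r:ℂ) * Complex.exp (θ * Complex.I)) ^ m *
          Complex.exp ((s:ℂ) * θ * Complex.I)
        = (c m * (r:ℂ)^m) * (Complex.exp ((m:ℂ) * (θ * Complex.I)) *
            Complex.exp ((s:ℂ) * θ * Complex.I)) := by
          rw [mul_pow, ← Complex.exp_nat_mul]; ring
      _ = _ := by rw [e1]
  exact hfe ▸ H

lemma hasSum_circle_conj {c : ℕ → ℂ} {u : ℂ → ℂ}
    (hu : ∀ z ∈ unitDisk, HasSum (fun m : ℕ => c m * z ^ m) (u z))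
    {r : ℝ} (hr0 : 0 < r) (hr1 : r < 1) (s : ℤ) (θ : ℝ) :
    HasSum (fun m : ℕ => ((starRingEnd ℂ) (c m) * (r:ℂ)^m) *
        Complex.exp (((((s - m : ℤ))):ℂ) * θ * Complex.I))
      ((starRingEnd ℂ) (u ((r:ℂ) * Complex.exp (θ * Complex.I))) *
        Complex.exp ((s:ℂ) * θ * Complex.I)) := by
  have H0 := (hu _ (zmem hr0 hr1 θ)).map (starRingEnd ℂ) continuous_conj
  have H := H0.mul_right (Complex.exp ((s:ℂ) * θ * Complex.I))
  have hcz : (starRingEnd ℂ) ((r:ℂ) * Complex.exp (θ * Complex.I))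
      = (r:ℂ) * Complex.exp (-((θ:ℂ) * Complex.I)) := by
    rw [map_mul, Complex.conj_ofReal, ← Complex.exp_conj, map_mul, Complex.conj_ofReal,
      Complex.conj_I]
    ring_nf
  have hfe : (fun m : ℕ => (starRingEnd ℂ) (c m * ((r:ℂ) * Complex.exp (θ * Complex.I)) ^ m) *
      Complex.exp ((s:ℂ) * θ * Complex.I))
      = fun m : ℕ => ((starRingEnd ℂ) (c m) * (r:ℂ)^m) *
        Complex.exp (((((s - m : ℤ))):ℂ) * θ * Complex.I) := by
    funext m
    rw [map_mul, map_pow, hcz]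
    have e1 : Complex.exp ((m:ℂ) * -((θ:ℂ) * Complex.I)) *
        Complex.exp ((s:ℂ) * θ * Complex.I)
        = Complex.exp (((((s - m : ℤ))):ℂ) * θ * Complex.I) := by
      rw [← Complex.exp_add]; congr 1; push_cast; ring
    calc (starRingEnd ℂ) (c m) * ((r:ℂ) * Complex.exp (-((θ:ℂ) * Complex.I))) ^ m *
          Complex.exp ((s:ℂ) * θ * Complex.I)
        = ((starRingEnd ℂ) (c m) * (r:ℂ)^m) * (Complex.exp ((m:ℂ) * -((θ:ℂ) * Complex.I)) *
            Complex.exp ((s:ℂ) * θ * Complex.I)) := by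
          rw [mul_pow, ← Complex.exp_nat_mul]; ring
      _ = _ := by rw [e1]
  exact hfe ▸ H

lemma eval_integral {h g : ℂ → ℂ} {a b : ℕ → ℂ}
    (hh : DifferentiableOn ℂ h unitDisk) (hg : DifferentiableOn ℂ g unitDisk)
    (hha : ∀ z ∈ unitDisk, HasSum (fun n : ℕ => a n * z ^ n) (h z))
    (hgb : ∀ z ∈ unitDisk, HasSum (fun n : ℕ => b n * z ^ n) (g z))
    {r : ℝ} (hr0 : 0 < r) (hr1 : r < 1) (s : ℤ) :
    (∫ θ in (0:ℝ)..(2*π), (h ((r:ℂ) * Complex.exp (θ * Complex.I)) +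
        (starRingEnd ℂ) (g ((r:ℂ) * Complex.exp (θ * Complex.I)))) *
        Complex.exp ((s:ℂ) * θ * Complex.I))
      = (∑' m : ℕ, (a m * (r:ℂ)^m) * (if (m:ℤ) + s = 0 then (2*π:ℂ) else 0))
        + ∑' m : ℕ, ((starRingEnd ℂ) (b m) * (r:ℂ)^m) *
            (if (s - m : ℤ) = 0 then (2*π:ℂ) else 0) := by
  have hnorm1 : ∀ (c : ℕ → ℂ) (m : ℕ), ‖c m * (r:ℂ)^m‖ = ‖c m‖ * r^m := by
    intro c m
    rw [norm_mul, norm_pow, Complex.norm_real, Real.norm_of_nonneg hr0.le]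
  have hc1 : Summable fun m => ‖a m * (r:ℂ)^m‖ := by
    simp_rw [hnorm1 a]; exact coeff_summable hha hr0 hr1
  have hc2 : Summable fun m => ‖(starRingEnd ℂ) (b m) * (r:ℂ)^m‖ := by
    have : ∀ m : ℕ, ‖(starRingEnd ℂ) (b m) * (r:ℂ)^m‖ = ‖b m‖ * r^m := by
      intro m; rw [norm_mul, norm_pow, Complex.norm_real, Real.norm_of_nonneg hr0.le,
        RCLike.norm_conj]
    simp_rw [this]; exact coeff_summable hgb hr0 hr1
  have cz : Continuous fun θ : ℝ => (r:ℂ) * Complex.exp ((θ:ℂ) * Complex.I) := by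
    continuity
  have ch : Continuous fun θ : ℝ => h ((r:ℂ) * Complex.exp ((θ:ℂ) * Complex.I)) := by
    rw [← continuousOn_univ]
    exact hh.continuousOn.comp cz.continuousOn (fun θ _ => zmem hr0 hr1 θ)
  have cg : Continuous fun θ : ℝ => g ((r:ℂ) * Complex.exp ((θ:ℂ) * Complex.I)) := by
    rw [← continuousOn_univ]
    exact hg.continuousOn.comp cz.continuousOn (fun θ _ => zmem hr0 hr1 θ)
  have cE : Continuous fun θ : ℝ => Complex.exp ((s:ℂ) * (θ:ℂ) * Complex.I) := by
    continuity
  have cgc : Continuous fun θ : ℝ =>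
      (starRingEnd ℂ) (g ((r:ℂ) * Complex.exp ((θ:ℂ) * Complex.I))) :=
    continuous_conj.comp cg
  simp_rw [add_mul]
  rw [intervalIntegral.integral_add
      (f := fun θ : ℝ => h ((r:ℂ) * Complex.exp ((θ:ℂ) * Complex.I)) *
        Complex.exp ((s:ℂ) * (θ:ℂ) * Complex.I))
      (g := fun θ : ℝ => (starRingEnd ℂ) (g ((r:ℂ) * Complex.exp ((θ:ℂ) * Complex.I))) *
        Complex.exp ((s:ℂ) * (θ:ℂ) * Complex.I))
      ((ch.mul cE).intervalIntegrable _ _)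
    ((cgc.mul cE).intervalIntegrable _ _)]
  rw [extract _ _ _ (fun θ => hasSum_circle hha hr0 hr1 s θ) hc1,
    extract _ _ _ (fun θ => hasSum_circle_conj hgb hr0 hr1 s θ) hc2]

/-- Theorem 3.1 (ii): coefficients of a harmonic `h¹` function. -/
theorem coeff_h1 (h g f : ℂ → ℂ) (a b : ℕ → ℂ)
    (hh : DifferentiableOn ℂ h unitDisk) (hg : DifferentiableOn ℂ g unitDisk)
    (hb0 : b 0 = 0)
    (hha : ∀ z ∈ unitDisk, HasSum (fun n : ℕ => a n * z ^ n) (h z))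
    (hgb : ∀ z ∈ unitDisk, HasSum (fun n : ℕ => b n * z ^ n) (g z))
    (hf : ∀ z ∈ unitDisk, f z = h z + (starRingEnd ℂ) (g z))
    (hf1 : InHardy 1 f) :
    ∀ p : ℝ, 0 < p → p < 1 →
      Summable (fun n : ℕ => ((n : ℝ) + 1) ^ (p - 2) * (‖a n‖ ^ p + ‖b n‖ ^ p)) := by
  intro p hp0 hp1
  obtain ⟨C, hC⟩ := hf1
  have h2pi : (0:ℝ) < 2*π := Real.two_pi_pos
  have hmean : ∀ r : ℝ, 0 < r → r < 1 →
      circleMean 1 f r = (1/(2*π)) *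
        ∫ θ in (0:ℝ)..(2*π), ‖f ((r:ℂ) * Complex.exp ((θ:ℂ) * Complex.I))‖ := by
    intro r hr0 hr1
    unfold circleMean
    norm_num [Real.rpow_one]
  have hint_norm : ∀ r : ℝ, 0 < r → r < 1 →
      (∫ θ in (0:ℝ)..(2*π), ‖f ((r:ℂ) * Complex.exp ((θ:ℂ) * Complex.I))‖) ≤ 2*π*C := by
    intro r hr0 hr1
    have hcm := hC r hr0 hr1
    rw [hmean r hr0 hr1] at hcm
    set X := ∫ θ in (0:ℝ)..(2*π), ‖f ((r:ℂ) * Complex.exp ((θ:ℂ) * Complex.I))‖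
    have := mul_le_mul_of_nonneg_left hcm h2pi.le
    calc X = 2*π * ((1/(2*π)) * X) := by field_simp
      _ ≤ 2*π*C := this
  have hC0 : 0 ≤ C := by
    refine le_trans ?_ (hC (1/2) (by norm_num) (by norm_num))
    unfold circleMean
    apply Real.rpow_nonneg
    apply mul_nonneg (by positivity)
    apply intervalIntegral.integral_nonneg h2pi.le
    intro θ _
    positivity
  have key : ∀ n : ℕ, ‖a n‖ ≤ C ∧ ‖b n‖ ≤ C := by
    intro n
    have bound : ∀ r : ℝ, 0 < r → r < 1 → ‖a n‖ * r^n ≤ C ∧ ‖b n‖ * r^n ≤ C := by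
      intro r hr0 hr1
      have hbound : ∀ s : ℤ,
          ‖∫ θ in (0:ℝ)..(2*π), (h ((r:ℂ) * Complex.exp (θ * Complex.I)) +
            (starRingEnd ℂ) (g ((r:ℂ) * Complex.exp (θ * Complex.I)))) *
            Complex.exp ((s:ℂ) * θ * Complex.I)‖ ≤ 2*π*C := by
        intro s
        refine le_trans (intervalIntegral.norm_integral_le_integral_norm h2pi.le) ?_
        refine le_trans (le_of_eq (intervalIntegral.integral_congr (g := fun θ : ℝ =>
          ‖f ((r:ℂ) * Complex.exp ((θ:ℂ) * Complex.I))‖) ?_)) (hint_norm r hr0 hr1)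
        intro θ _
        dsimp only
        rw [← hf _ (zmem hr0 hr1 θ), norm_mul]
        have : ‖Complex.exp ((s:ℂ) * (θ:ℂ) * Complex.I)‖ = 1 := by
          rw [Complex.norm_exp]
          simp
        rw [this, mul_one]
      have hnormval : ∀ c : ℂ, ‖c * (r:ℂ)^n * (2*(π:ℝ):ℂ)‖ = ‖c‖ * r^n * (2*π) := by
        intro c
        rw [norm_mul, norm_mul, norm_pow, Complex.norm_real, Real.norm_of_nonneg hr0.le]
        congr 1
        simp [Complex.norm_real, abs_of_pos Real.pi_pos]
      constructor
      · have hI := eval_integral hh hg hha hgb hr0 hr1 (-(n:ℤ))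
        have t1 : (∑' m : ℕ, (a m * (r:ℂ)^m) *
            (if (m:ℤ) + (-(n:ℤ)) = 0 then (2*π:ℂ) else 0)) = a n * (r:ℂ)^n * (2*π:ℂ) := by
          rw [tsum_eq_single n]
          · rw [if_pos (by omega)]
          · intro m hm
            rw [if_neg (by omega), mul_zero]
        have t2 : (∑' m : ℕ, ((starRingEnd ℂ) (b m) * (r:ℂ)^m) *
            (if (-(n:ℤ) - m = 0) then (2*π:ℂ) else 0)) = 0 := by
          rw [tsum_congr (g := fun _ : ℕ => (0:ℂ)) ?_, tsum_zero]
          intro m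
          rcases Nat.eq_zero_or_pos m with hm | hm
          · subst hm; simp [hb0]
          · rw [if_neg (by omega), mul_zero]
        rw [t1, t2, add_zero] at hI
        have hn := hbound (-(n:ℤ))
        rw [hI, hnormval] at hn
        nlinarith [norm_nonneg (a n), pow_nonneg hr0.le n]
      · rcases Nat.eq_zero_or_pos n with hn0 | hn0
        · subst hn0; simp [hb0, hC0]
        · have hI := eval_integral hh hg hha hgb hr0 hr1 (n:ℤ)
          have t1 : (∑' m : ℕ, (a m * (r:ℂ)^m) *
              (if (m:ℤ) + (n:ℤ) = 0 then (2*π:ℂ) else 0)) = 0 := by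
            rw [tsum_congr (g := fun _ : ℕ => (0:ℂ)) ?_, tsum_zero]
            intro m
            rw [if_neg (by omega), mul_zero]
          have t2 : (∑' m : ℕ, ((starRingEnd ℂ) (b m) * (r:ℂ)^m) *
              (if ((n:ℤ) - m = 0) then (2*π:ℂ) else 0))
              = (starRingEnd ℂ) (b n) * (r:ℂ)^n * (2*π:ℂ) := by
            rw [tsum_eq_single n]
            · rw [if_pos (by omega)]
            · intro m hm
              rw [if_neg (by omega), mul_zero]
          rw [t1, t2, zero_add] at hI
          have hn := hbound (n:ℤ)
          rw [hI, hnormval] at hn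
          rw [RCLike.norm_conj] at hn
          nlinarith [norm_nonneg (b n), pow_nonneg hr0.le n]
    have lim : ∀ c : ℂ, (∀ r : ℝ, 0 < r → r < 1 → ‖c‖ * r^n ≤ C) → ‖c‖ ≤ C := by
      intro c hc
      have ev : ∀ᶠ r in nhdsWithin (1:ℝ) (Iio 1), ‖c‖ * r^n ≤ C := by
        filter_upwards [Ioo_mem_nhdsLT_of_mem
          (⟨by norm_num, le_refl (1:ℝ)⟩ : (1:ℝ) ∈ Ioc (0:ℝ) 1)] with r hr
        exact hc r hr.1 hr.2
      have ct : Filter.Tendsto (fun r : ℝ => ‖c‖ * r^n)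
          (nhdsWithin 1 (Iio 1)) (nhds (‖c‖)) := by
        have c1 : Continuous fun r : ℝ => ‖c‖ * r^n := continuous_const.mul (continuous_pow n)
        have := (c1.tendsto (1:ℝ)).mono_left (nhdsWithin_le_nhds (s := Iio (1:ℝ)))
        simpa using this
      exact le_of_tendsto ct ev
    exact ⟨lim (a n) fun r h1 h2 => (bound r h1 h2).1,
      lim (b n) fun r h1 h2 => (bound r h1 h2).2⟩
  have hs : Summable fun n : ℕ => ((n:ℝ)+1)^(p-2) := by
    have h1 : Summable fun k : ℕ => ((k:ℝ) ^ (2 - p))⁻¹ :=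
      Real.summable_nat_rpow_inv.2 (by linarith)
    have h2 : Summable fun n : ℕ => (((n+1 : ℕ):ℝ) ^ (2 - p))⁻¹ :=
      (summable_nat_add_iff 1).2 h1
    refine h2.congr fun n => ?_
    rw [← Real.rpow_neg (by positivity)]
    push_cast
    ring_nf
  refine Summable.of_nonneg_of_le (fun n => ?_) (fun n => ?_) (hs.mul_right (2 * C^p))
  · positivity
  · apply mul_le_mul_of_nonneg_left _ (Real.rpow_nonneg (by positivity) _)
    have ha := Real.rpow_le_rpow (norm_nonneg (a n)) (key n).1 hp0.le
    have hbb := Real.rpow_le_rpow (norm_nonneg (b n)) (key n).2 hp0.le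
    linarith
end
end

section
/- Let f = h + conj(g) be a harmonic function in the unit disk 𝔻 with Taylor expansions h(z) = Σ_{n≥0} a_n zⁿ and g(z) = Σ_{n≥0} b_n zⁿ, where the coefficients a_n and b_n are nonnegative real numbers decreasing monotonically to 0 (with b₀ = 0). If Σ_{n≥0} (a_n + b_n)/(n+1) < ∞, then f ∈ h¹. -/
open Complex Real Set

noncomputable section

def zmap (r θ : ℝ) : ℂ := (r:ℂ) * Complex.exp (θ * Complex.I)



def psum (n : ℕ) (w : ℂ) : ℂ := ∑ k ∈ Finset.range (n+1), w^k

lemma abel_fin (c : ℕ → ℝ) (w : ℂ) (N : ℕ) :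
    ∑ n ∈ Finset.range N, (((c n - c (n+1) : ℝ)) : ℂ) * psum n w
      = ∑ k ∈ Finset.range N, (((c k - c N : ℝ)) : ℂ) * w^k := by
  induction N with
  | zero => simp
  | succ N ih =>
      rw [Finset.sum_range_succ, ih]
      rw [Finset.sum_range_succ (f := fun k => (((c k - c (N+1) : ℝ)) : ℂ) * w^k)]
      unfold psum
      push_cast
      rw [Finset.sum_range_succ (f := fun k => w^k), mul_add, ← add_assoc]
      congr 1
      rw [Finset.mul_sum, ← Finset.sum_add_distrib]
      exact Finset.sum_congr rfl (fun k _ => by ring)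

lemma geom_partial_le {x : ℝ} (h0 : 0 ≤ x) (h1 : x < 1) (N : ℕ) :
    ∑ k ∈ Finset.range N, x^k ≤ 1/(1-x) := by
  rw [geom_sum_eq (by intro he; rw [he] at h1; exact lt_irrefl 1 h1 : x ≠ 1)]
  have h2 : (x^N - 1)/(x-1) = (1 - x^N)/(1-x) := by
    rw [div_eq_div_iff (sub_ne_zero.2 (by intro he; rw [he] at h1; exact lt_irrefl 1 h1))
      (by intro he; nlinarith : (1:ℝ) - x ≠ 0)]
    ring
  rw [h2]
  gcongr
  · nlinarith [pow_nonneg h0 N]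

lemma psum_norm_le {w : ℂ} (h1 : ‖w‖ < 1) (n : ℕ) : ‖psum n w‖ ≤ 1/(1-‖w‖) := by
  calc ‖psum n w‖ ≤ ∑ k ∈ Finset.range (n+1), ‖w^k‖ := norm_sum_le _ _
    _ = ∑ k ∈ Finset.range (n+1), ‖w‖^k := by simp [norm_pow]
    _ ≤ 1/(1-‖w‖) := geom_partial_le (norm_nonneg w) h1 _

lemma psum_norm_le' {w : ℂ} (h1 : ‖w‖ ≤ 1) (hw : w ≠ 1) (n : ℕ) :
    ‖psum n w‖ ≤ 2 / ‖1 - w‖ := by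
  have hd : (0:ℝ) < ‖1 - w‖ := by
    rw [norm_pos_iff]; exact sub_ne_zero.2 (fun he => hw he.symm)
  unfold psum
  rw [geom_sum_eq hw, norm_div, norm_sub_rev w 1]
  gcongr
  calc ‖w^(n+1) - 1‖ ≤ ‖w^(n+1)‖ + ‖(1:ℂ)‖ := norm_sub_le _ _
    _ ≤ 1 + 1 := by
        rw [norm_pow, norm_one]
        exact add_le_add (pow_le_one₀ (norm_nonneg w) h1) le_rfl
    _ = 2 := by norm_num

lemma psum_norm_le_card {w : ℂ} (h1 : ‖w‖ ≤ 1) (n : ℕ) : ‖psum n w‖ ≤ n+1 := by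
  calc ‖psum n w‖ ≤ ∑ k ∈ Finset.range (n+1), ‖w^k‖ := norm_sum_le _ _
    _ ≤ ∑ k ∈ Finset.range (n+1), 1 := by
        apply Finset.sum_le_sum; intro k _; rw [norm_pow]; exact pow_le_one₀ (norm_nonneg w) h1
    _ = n+1 := by simp


-- the weight
def Lw (n : ℕ) : ℝ := 1 + Real.log ((n:ℝ)+1)

lemma Lw_nonneg (n : ℕ) : 0 ≤ Lw n := by
  have : (0:ℝ) ≤ Real.log ((n:ℝ)+1) := Real.log_nonneg (by push_cast; linarith [Nat.cast_nonneg (α := ℝ) n])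
  unfold Lw; linarith

lemma abel_real (c : ℕ → ℝ) (N : ℕ) :
    ∑ n ∈ Finset.range N, (c n - c (n+1)) * Lw n
      = c 0 * Lw 0 - c N * Lw N + ∑ n ∈ Finset.range N, c (n+1) * (Lw (n+1) - Lw n) := by
  induction N with
  | zero => simp
  | succ N ih =>
      rw [Finset.sum_range_succ, ih, Finset.sum_range_succ (f := fun n => c (n+1) * (Lw (n+1) - Lw n))]
      ring

lemma Lw_diff_le (n : ℕ) : Lw (n+1) - Lw n ≤ 2 / ((n:ℝ)+2) := by
  have h1 : (0:ℝ) < (n:ℝ)+1 := by positivity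
  have h2 : (0:ℝ) < (n:ℝ)+2 := by positivity
  have : Lw (n+1) - Lw n = Real.log (((n:ℝ)+2)/((n:ℝ)+1)) := by
    unfold Lw
    rw [Real.log_div (by linarith) (by linarith)]
    push_cast; ring
  rw [this]
  have := Real.log_le_sub_one_of_pos (x := ((n:ℝ)+2)/((n:ℝ)+1)) (by positivity)
  have heq : ((n:ℝ)+2)/((n:ℝ)+1) - 1 = 1/((n:ℝ)+1) := by field_simp; norm_num
  rw [heq] at this
  calc Real.log (((n:ℝ)+2)/((n:ℝ)+1)) ≤ 1/((n:ℝ)+1) := this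
    _ ≤ 2/((n:ℝ)+2) := by rw [div_le_div_iff₀ h1 h2]; linarith

lemma coef_partial_le (c : ℕ → ℝ) (hanti : Antitone c) (hnn : ∀ n, 0 ≤ c n)
    (hS : Summable (fun n => c n / ((n:ℝ)+1))) (N : ℕ) :
    ∑ n ∈ Finset.range N, (c n - c (n+1)) * Lw n ≤ c 0 + 2 * ∑' n, c n / ((n:ℝ)+1) := by
  have hnn' : ∀ n : ℕ, 0 ≤ c n / ((n:ℝ)+1) := fun n => div_nonneg (hnn n) (by positivity)
  rw [abel_real]
  have h1 : c 0 * Lw 0 = c 0 := by unfold Lw; simp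
  have h2 : 0 ≤ c N * Lw N := mul_nonneg (hnn N) (Lw_nonneg N)
  have h3 : ∑ n ∈ Finset.range N, c (n+1) * (Lw (n+1) - Lw n)
      ≤ 2 * ∑' n, c n / ((n:ℝ)+1) := by
    calc ∑ n ∈ Finset.range N, c (n+1) * (Lw (n+1) - Lw n)
        ≤ ∑ n ∈ Finset.range N, 2 * (c (n+1) / ((n:ℝ)+1+1)) := by
          apply Finset.sum_le_sum; intro n _
          have := Lw_diff_le n
          have hc := hnn (n+1)
          calc c (n+1) * (Lw (n+1) - Lw n) ≤ c (n+1) * (2/((n:ℝ)+2)) := by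
                apply mul_le_mul_of_nonneg_left _ hc
                exact this
            _ = 2 * (c (n+1) / ((n:ℝ)+1+1)) := by ring
      _ = 2 * ∑ n ∈ Finset.range N, (fun m : ℕ => c m / ((m:ℝ)+1)) (n+1) := by
          rw [Finset.mul_sum]; apply Finset.sum_congr rfl; intro n _; push_cast; ring
      _ ≤ 2 * ∑ n ∈ Finset.range (N+1), c n / ((n:ℝ)+1) := by
          have hs := Finset.sum_range_succ' (fun m : ℕ => c m / ((m:ℝ)+1)) N
          apply mul_le_mul_of_nonneg_left _ (by norm_num : (0:ℝ) ≤ 2)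
          rw [hs]
          have h0 := hnn' 0
          push_cast at h0 ⊢
          linarith
      _ ≤ 2 * ∑' n, c n / ((n:ℝ)+1) := by
          apply mul_le_mul_of_nonneg_left _ (by norm_num : (0:ℝ) ≤ 2)
          exact Summable.sum_le_tsum _ (fun n _ => hnn' n) hS
  linarith

lemma coef_summable (c : ℕ → ℝ) (hanti : Antitone c) (hnn : ∀ n, 0 ≤ c n)
    (hS : Summable (fun n => c n / ((n:ℝ)+1))) :
    Summable (fun n => (c n - c (n+1)) * Lw n) :=
  summable_of_sum_range_le
    (fun n => mul_nonneg (sub_nonneg.2 (hanti (Nat.le_succ n))) (Lw_nonneg n))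
    (coef_partial_le c hanti hnn hS)

lemma coef_tsum_le (c : ℕ → ℝ) (hanti : Antitone c) (hnn : ∀ n, 0 ≤ c n)
    (hS : Summable (fun n => c n / ((n:ℝ)+1))) :
    ∑' n, (c n - c (n+1)) * Lw n ≤ c 0 + 2 * ∑' n, c n / ((n:ℝ)+1) :=
  Real.tsum_le_of_sum_range_le
    (fun n => mul_nonneg (sub_nonneg.2 (hanti (Nat.le_succ n))) (Lw_nonneg n))
    (coef_partial_le c hanti hnn hS)



lemma zmap_norm (r θ : ℝ) (hr : 0 ≤ r) : ‖zmap r θ‖ = r := by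
  unfold zmap
  rw [norm_mul, Complex.norm_real, Real.norm_eq_abs, _root_.abs_of_nonneg hr]
  simp [Complex.norm_exp]

lemma one_sub_zmap_sq (r θ : ℝ) : ‖1 - zmap r θ‖^2 = 1 - 2*r*Real.cos θ + r^2 := by
  have : ‖1 - zmap r θ‖^2 = Complex.normSq (1 - zmap r θ) := by
    rw [← Complex.sq_norm]
  rw [this]
  unfold zmap
  rw [Complex.exp_mul_I]
  simp [Complex.normSq_apply, ← Complex.ofReal_cos, ← Complex.ofReal_sin]
  nlinarith [Real.sin_sq_add_cos_sq θ]

lemma one_sub_zmap_lower {r θ : ℝ} (hr : 1/2 ≤ r) (hr1 : r ≤ 1) (h0 : 0 ≤ θ) (hπ : θ ≤ π) :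
    Real.sqrt 2 * θ / π ≤ ‖1 - zmap r θ‖ := by
  have hπ0 := Real.pi_pos
  have hcos := Real.cos_le_one_sub_mul_cos_sq (x := θ) (by rwa [_root_.abs_of_nonneg h0])
  have hsq : (Real.sqrt 2 * θ / π)^2 ≤ ‖1 - zmap r θ‖^2 := by
    rw [one_sub_zmap_sq]
    have h2 : (Real.sqrt 2)^2 = 2 := Real.sq_sqrt (by norm_num)
    have expand : (Real.sqrt 2 * θ / π)^2 = 2 * θ^2 / π^2 := by
      rw [div_pow, mul_pow, h2]
    rw [expand]
    have hcc : 2*θ^2/π^2 ≤ 1 - Real.cos θ := by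
      have hring : 2/π^2*θ^2 = 2*θ^2/π^2 := by ring
      linarith [hring ▸ (by linarith : 2/π^2*θ^2 ≤ 1 - Real.cos θ)]
    have hkey : 1 - Real.cos θ ≤ 1 - 2*r*Real.cos θ + r^2 := by
      nlinarith [sq_nonneg (1-r),
        mul_nonneg (show (0:ℝ) ≤ 2*r - 1 by linarith)
          (show (0:ℝ) ≤ 1 - Real.cos θ by nlinarith [Real.cos_le_one θ])]
    linarith
  calc Real.sqrt 2 * θ / π = Real.sqrt ((Real.sqrt 2 * θ / π)^2) :=
        (Real.sqrt_sq (by positivity)).symm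
    _ ≤ Real.sqrt (‖1 - zmap r θ‖^2) := Real.sqrt_le_sqrt hsq
    _ = ‖1 - zmap r θ‖ := Real.sqrt_sq (norm_nonneg _)


lemma norm_one_sub_zmap_symm (r θ : ℝ) : ‖1 - zmap r (2*π - θ)‖ = ‖1 - zmap r θ‖ := by
  have hc : Real.cos (2*π - θ) = Real.cos θ := by
    rw [Real.cos_sub]; simp
  have hsq : ‖1 - zmap r (2*π - θ)‖^2 = ‖1 - zmap r θ‖^2 := by
    rw [one_sub_zmap_sq, one_sub_zmap_sq, hc]
  calc ‖1 - zmap r (2*π - θ)‖ = Real.sqrt (‖1 - zmap r (2*π - θ)‖^2) :=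
        (Real.sqrt_sq (norm_nonneg _)).symm
    _ = Real.sqrt (‖1 - zmap r θ‖^2) := by rw [hsq]
    _ = ‖1 - zmap r θ‖ := Real.sqrt_sq (norm_nonneg _)

lemma two_div_lower {θ : ℝ} (h0 : 0 < θ) (hle : Real.sqrt 2 * θ / π ≤ ‖(1:ℂ) - zmap 1 0‖ ∨ True) : True := trivial

lemma mid_bound {r θ : ℝ} (hr : 1/2 ≤ r) (hr1 : r < 1) (h0 : 0 < θ) (h2 : θ < 2*π) (n : ℕ) :
    ‖psum n (zmap r θ)‖ ≤ Real.sqrt 2 * π * (1/θ + 1/(2*π - θ)) := by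
  have hπ0 := Real.pi_pos
  have hrn : ‖zmap r θ‖ ≤ 1 := by rw [zmap_norm r θ (by linarith)]; linarith
  have hs2 : (0:ℝ) < Real.sqrt 2 := by positivity
  -- get a lower bound on ‖1 - z‖ of the form √2 * d / π with d = θ or 2π - θ
  have key : ∀ d : ℝ, 0 < d → Real.sqrt 2 * d / π ≤ ‖1 - zmap r θ‖ →
      ‖psum n (zmap r θ)‖ ≤ Real.sqrt 2 * π / d := by
    intro d hd hlow
    have hld : (0:ℝ) < Real.sqrt 2 * d / π := by positivity
    have hz1 : zmap r θ ≠ 1 := by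
      intro he
      rw [he] at hlow
      simp at hlow
      nlinarith
    have hb := psum_norm_le' hrn hz1 n
    have h22 : Real.sqrt 2 * Real.sqrt 2 = 2 := Real.mul_self_sqrt (by norm_num)
    have heq : 2 / (Real.sqrt 2 * d / π) = Real.sqrt 2 * π / d := by
      rw [div_eq_div_iff (ne_of_gt hld) (ne_of_gt hd)]
      field_simp
      ring_nf
      rw [Real.sq_sqrt (by norm_num : (0:ℝ) ≤ 2)]
    calc ‖psum n (zmap r θ)‖ ≤ 2 / ‖1 - zmap r θ‖ := hb
      _ ≤ 2 / (Real.sqrt 2 * d / π) := by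
          apply div_le_div_of_nonneg_left (by norm_num) hld hlow
      _ = Real.sqrt 2 * π / d := heq
  rcases le_or_gt θ π with hθπ | hθπ
  · have hlow := one_sub_zmap_lower hr hr1.le h0.le hθπ
    have := key θ h0 hlow
    calc ‖psum n (zmap r θ)‖ ≤ Real.sqrt 2 * π / θ := this
      _ ≤ Real.sqrt 2 * π * (1/θ + 1/(2*π - θ)) := by
          have : (0:ℝ) ≤ Real.sqrt 2 * π * (1/(2*π-θ)) :=
            mul_nonneg (by positivity) (one_div_nonneg.mpr (by linarith))
          rw [mul_add]
          calc Real.sqrt 2 * π / θ = Real.sqrt 2 * π * (1/θ) := by ring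
            _ ≤ _ := by linarith
  · have hθ' : 0 ≤ 2*π - θ := by linarith
    have hlow' := one_sub_zmap_lower hr hr1.le hθ' (by linarith : 2*π - θ ≤ π)
    rw [norm_one_sub_zmap_symm] at hlow'
    have := key (2*π - θ) (by linarith) hlow'
    calc ‖psum n (zmap r θ)‖ ≤ Real.sqrt 2 * π / (2*π - θ) := this
      _ ≤ Real.sqrt 2 * π * (1/θ + 1/(2*π - θ)) := by
          have : (0:ℝ) ≤ Real.sqrt 2 * π * (1/θ) := by positivity
          rw [mul_add]
          calc Real.sqrt 2 * π / (2*π-θ) = Real.sqrt 2 * π * (1/(2*π-θ)) := by ring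
            _ ≤ _ := by linarith



lemma pointwise_bound (c : ℕ → ℝ) (hanti : Antitone c) (hnn : ∀ n, 0 ≤ c n)
    {w : ℂ} (h1 : ‖w‖ < 1) {s : ℂ} (hs : HasSum (fun n : ℕ => (c n : ℂ) * w ^ n) s) (N : ℕ) :
    ‖s‖ ≤ ∑ n ∈ Finset.range N, (c n - c (n+1)) * ‖psum n w‖ + 2 * c N / (1 - ‖w‖) := by
  have hw0 : (0:ℝ) < 1 - ‖w‖ := by linarith
  have hsm := hs.summable
  have key : s = (∑ n ∈ Finset.range N, (((c n - c (n+1) : ℝ)) : ℂ) * psum n w)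
      + (c N : ℂ) * ∑ k ∈ Finset.range N, w^k
      + ∑' k, (c (k+N) : ℂ) * w^(k+N) := by
    rw [← hs.tsum_eq, ← Summable.sum_add_tsum_nat_add N hsm]
    congr 1
    rw [abel_fin]
    push_cast
    rw [Finset.mul_sum, ← Finset.sum_add_distrib]
    exact Finset.sum_congr rfl (fun k _ => by ring)
  have hgeom : ‖∑ k ∈ Finset.range N, w^k‖ ≤ 1/(1-‖w‖) := by
    calc ‖∑ k ∈ Finset.range N, w^k‖ ≤ ∑ k ∈ Finset.range N, ‖w‖^k := by
          simpa [norm_pow] using norm_sum_le (Finset.range N) (fun k => w^k)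
      _ ≤ 1/(1-‖w‖) := geom_partial_le (norm_nonneg w) h1 _
  have htail : ‖∑' k, (c (k+N) : ℂ) * w^(k+N)‖ ≤ c N * (1/(1-‖w‖)) := by
    have hg : HasSum (fun k : ℕ => c N * ‖w‖^k) (c N * (1-‖w‖)⁻¹) :=
      (hasSum_geometric_of_lt_one (norm_nonneg w) h1).mul_left (c N)
    have hb : ∀ k : ℕ, ‖(c (k+N) : ℂ) * w^(k+N)‖ ≤ c N * ‖w‖^k := by
      intro k
      rw [norm_mul, norm_pow, Complex.norm_real, Real.norm_eq_abs, _root_.abs_of_nonneg (hnn _)]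
      exact mul_le_mul (hanti (Nat.le_add_left N k)) (pow_le_pow_of_le_one (norm_nonneg w)
        h1.le (Nat.le_add_right k N)) (pow_nonneg (norm_nonneg w) _) (hnn N)
    simpa [one_div] using tsum_of_norm_bounded hg hb
  calc ‖s‖ ≤ ‖∑ n ∈ Finset.range N, (((c n - c (n+1) : ℝ)) : ℂ) * psum n w‖
        + ‖(c N : ℂ) * ∑ k ∈ Finset.range N, w^k‖
        + ‖∑' k, (c (k+N) : ℂ) * w^(k+N)‖ := by
        rw [key]; exact (norm_add_le _ _).trans (by gcongr; exact norm_add_le _ _)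
    _ ≤ ∑ n ∈ Finset.range N, (c n - c (n+1)) * ‖psum n w‖ + c N * (1/(1-‖w‖))
        + c N * (1/(1-‖w‖)) := by
        gcongr
        · calc ‖∑ n ∈ Finset.range N, (((c n - c (n+1) : ℝ)) : ℂ) * psum n w‖
              ≤ ∑ n ∈ Finset.range N, ‖(((c n - c (n+1) : ℝ)) : ℂ) * psum n w‖ :=
                norm_sum_le _ _
            _ = ∑ n ∈ Finset.range N, (c n - c (n+1)) * ‖psum n w‖ := by
                apply Finset.sum_congr rfl; intro n _
                rw [norm_mul, Complex.norm_real, Real.norm_eq_abs,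
                  _root_.abs_of_nonneg (sub_nonneg.2 (hanti (Nat.le_succ n)))]
        · rw [norm_mul, Complex.norm_real, Real.norm_eq_abs, _root_.abs_of_nonneg (hnn N)]
          exact mul_le_mul_of_nonneg_left hgeom (hnn N)
    _ = ∑ n ∈ Finset.range N, (c n - c (n+1)) * ‖psum n w‖ + 2 * c N / (1 - ‖w‖) := by
        ring


lemma psum_cont (n : ℕ) (r : ℝ) : Continuous (fun θ : ℝ => ‖psum n (zmap r θ)‖) := by
  have hz : Continuous (zmap r) :=
    continuous_const.mul (Complex.continuous_exp.comp
      (Complex.continuous_ofReal.mul continuous_const))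
  have hp : Continuous (psum n) := continuous_finset_sum _ (fun k _ => continuous_pow k)
  exact (hp.comp hz).norm

lemma log_two_pi_le : Real.log (2*π) ≤ 2 := by
  have hπ := Real.pi_pos
  rw [Real.log_le_iff_le_exp (by linarith)]
  have he : (2.7182818283:ℝ) < Real.exp 1 := Real.exp_one_gt_d9
  have h2 : Real.exp 2 = Real.exp 1 * Real.exp 1 := by
    rw [← Real.exp_add]; norm_num
  nlinarith [Real.pi_lt_d2]

lemma sqrt2_le : Real.sqrt 2 ≤ 1.5 := by
  rw [show (1.5:ℝ) = Real.sqrt (1.5^2) from (Real.sqrt_sq (by norm_num)).symm]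
  exact Real.sqrt_le_sqrt (by norm_num)

lemma ker_bound (r : ℝ) (hr0 : 0 < r) (hr1 : r < 1) (n : ℕ) :
    ∫ θ in (0:ℝ)..(2*π), ‖psum n (zmap r θ)‖ ≤ 25 * Lw n := by
  have hπ := Real.pi_pos
  have hLn : 1 ≤ Lw n := by
    have : (0:ℝ) ≤ Real.log ((n:ℝ)+1) := Real.log_nonneg (by linarith [Nat.cast_nonneg (α := ℝ) n])
    unfold Lw; linarith
  have hlog : 0 ≤ Real.log ((n:ℝ)+1) := Real.log_nonneg (by linarith [Nat.cast_nonneg (α := ℝ) n])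
  have hcont := psum_cont n r
  have hInt : ∀ u v : ℝ, IntervalIntegrable (fun θ : ℝ => ‖psum n (zmap r θ)‖)
      MeasureTheory.volume u v := fun u v => hcont.intervalIntegrable u v
  rcases le_or_gt r (1/2) with hhalf | hhalf
  · -- small r : pointwise ≤ 2
    have hple : ∀ θ : ℝ, ‖psum n (zmap r θ)‖ ≤ 2 := by
      intro θ
      have h1 : ‖zmap r θ‖ < 1 := by rw [zmap_norm r θ hr0.le]; linarith
      calc ‖psum n (zmap r θ)‖ ≤ 1/(1-‖zmap r θ‖) := psum_norm_le h1 n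
        _ ≤ 2 := by
            rw [zmap_norm r θ hr0.le]
            rw [div_le_iff₀ (by linarith)]
            linarith
    calc ∫ θ in (0:ℝ)..(2*π), ‖psum n (zmap r θ)‖ ≤ ∫ _ in (0:ℝ)..(2*π), (2:ℝ) := by
          apply intervalIntegral.integral_mono_on (by linarith) (hInt 0 (2*π))
            (intervalIntegrable_const)
          intro θ _; exact hple θ
      _ = 2*π*2 := by rw [intervalIntegral.integral_const, smul_eq_mul]; ring
      _ ≤ 25 * 1 := by nlinarith [Real.pi_lt_d2]
      _ ≤ 25 * Lw n := by linarith
  · -- large r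
    set t : ℝ := ((n:ℝ)+1)⁻¹ with ht
    have htpos : 0 < t := by positivity
    have htle1 : t ≤ 1 := by
      rw [ht]; rw [inv_le_one_iff₀]; right; push_cast; linarith [Nat.cast_nonneg (α := ℝ) n]
    have htπ : t < π := by nlinarith [Real.pi_gt_three]
    have hmid : t ≤ 2*π - t := by nlinarith
    have hsplit : ∫ θ in (0:ℝ)..(2*π), ‖psum n (zmap r θ)‖
        = (∫ θ in (0:ℝ)..t, ‖psum n (zmap r θ)‖)
          + (∫ θ in t..(2*π - t), ‖psum n (zmap r θ)‖)
          + (∫ θ in (2*π - t)..(2*π), ‖psum n (zmap r θ)‖) := by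
      rw [intervalIntegral.integral_add_adjacent_intervals (hInt 0 t) (hInt t (2*π - t)),
        intervalIntegral.integral_add_adjacent_intervals (hInt 0 (2*π-t)) (hInt (2*π-t) (2*π))]
    have hcard : ∀ θ : ℝ, ‖psum n (zmap r θ)‖ ≤ (n:ℝ)+1 := by
      intro θ
      have h1 : ‖zmap r θ‖ ≤ 1 := by rw [zmap_norm r θ hr0.le]; linarith
      exact_mod_cast psum_norm_le_card h1 n
    have hend1 : ∫ θ in (0:ℝ)..t, ‖psum n (zmap r θ)‖ ≤ 1 := by
      calc ∫ θ in (0:ℝ)..t, ‖psum n (zmap r θ)‖ ≤ ∫ _ in (0:ℝ)..t, ((n:ℝ)+1) := by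
            apply intervalIntegral.integral_mono_on htpos.le (hInt 0 t)
              intervalIntegrable_const
            intro θ _; exact hcard θ
        _ = t * ((n:ℝ)+1) := by rw [intervalIntegral.integral_const, smul_eq_mul]; ring
        _ = 1 := by rw [ht]; field_simp
    have hend2 : ∫ θ in (2*π - t)..(2*π), ‖psum n (zmap r θ)‖ ≤ 1 := by
      calc ∫ θ in (2*π-t)..(2*π), ‖psum n (zmap r θ)‖ ≤ ∫ _ in (2*π-t)..(2*π), ((n:ℝ)+1) := by
            apply intervalIntegral.integral_mono_on (by linarith) (hInt _ _)
              intervalIntegrable_const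
            intro θ _; exact hcard θ
        _ = t * ((n:ℝ)+1) := by rw [intervalIntegral.integral_const, smul_eq_mul]; ring
        _ = 1 := by rw [ht]; field_simp
    -- the middle integral
    have hmono : ∫ θ in t..(2*π - t), ‖psum n (zmap r θ)‖
        ≤ ∫ θ in t..(2*π - t), Real.sqrt 2 * π * (1/θ + 1/(2*π - θ)) := by
      apply intervalIntegral.integral_mono_on hmid (hInt _ _)
      · apply ContinuousOn.intervalIntegrable
        apply ContinuousOn.mul continuousOn_const
        apply ContinuousOn.add
        · apply ContinuousOn.div continuousOn_const continuousOn_id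
          intro x hx
          rw [uIcc_of_le hmid] at hx
          exact ne_of_gt (lt_of_lt_of_le htpos hx.1)
        · apply ContinuousOn.div continuousOn_const (by fun_prop)
          intro x hx
          rw [uIcc_of_le hmid] at hx
          have : x ≤ 2*π - t := hx.2
          intro hc
          nlinarith [hx.2]
      · intro θ hθ
        exact mid_bound (by linarith) hr1 (lt_of_lt_of_le htpos hθ.1)
          (by nlinarith [hθ.2]) n
    have hint1 : ∫ θ in t..(2*π - t), (1:ℝ)/θ = Real.log ((2*π - t)/t) := by
      rw [integral_one_div]
      intro hc
      rw [uIcc_of_le hmid] at hc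
      exact absurd hc.1 (by linarith)
    have hint2 : ∫ θ in t..(2*π - t), (1:ℝ)/(2*π - θ) = Real.log ((2*π - t)/t) := by
      have := intervalIntegral.integral_comp_sub_left (a := t) (b := 2*π - t)
        (fun x => (1:ℝ)/x) (2*π)
      rw [this]
      have h1 : 2*π - (2*π - t) = t := by ring
      rw [h1, integral_one_div]
      intro hc
      rw [uIcc_of_le hmid] at hc
      exact absurd hc.1 (by linarith)
    have hlogle : Real.log ((2*π - t)/t) ≤ 2 + Real.log ((n:ℝ)+1) := by
      have hq : (2*π - t)/t ≤ 2*π*((n:ℝ)+1) := by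
        have hne : ((n:ℝ)+1) ≠ 0 := by positivity
        have hqe : (2*π - t)/t = 2*π*((n:ℝ)+1) - 1 := by
          rw [ht]; field_simp
        rw [hqe]; linarith
      calc Real.log ((2*π - t)/t) ≤ Real.log (2*π*((n:ℝ)+1)) := by
            apply Real.log_le_log _ hq
            apply div_pos (by linarith) htpos
        _ = Real.log (2*π) + Real.log ((n:ℝ)+1) := by
            rw [Real.log_mul (by positivity) (by positivity)]
        _ ≤ 2 + Real.log ((n:ℝ)+1) := by linarith [log_two_pi_le]
    have hmidval : ∫ θ in t..(2*π - t), Real.sqrt 2 * π * (1/θ + 1/(2*π - θ))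
        = Real.sqrt 2 * π * (2 * Real.log ((2*π - t)/t)) := by
      rw [intervalIntegral.integral_const_mul]
      have hi1 : IntervalIntegrable (fun θ : ℝ => (1:ℝ)/θ) MeasureTheory.volume t (2*π - t) := by
        apply ContinuousOn.intervalIntegrable
        apply ContinuousOn.div continuousOn_const continuousOn_id
        intro x hx
        rw [uIcc_of_le hmid] at hx
        exact ne_of_gt (lt_of_lt_of_le htpos hx.1)
      have hi2 : IntervalIntegrable (fun θ : ℝ => (1:ℝ)/(2*π - θ))
          MeasureTheory.volume t (2*π - t) := by
        apply ContinuousOn.intervalIntegrable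
        apply ContinuousOn.div continuousOn_const (by fun_prop)
        intro x hx
        rw [uIcc_of_le hmid] at hx
        intro hc
        nlinarith [hx.2]
      rw [intervalIntegral.integral_add hi1 hi2, hint1, hint2]
      ring
    have hK : Real.sqrt 2 * π ≤ 4.8 := by
      have h1 : (0:ℝ) ≤ Real.sqrt 2 := Real.sqrt_nonneg 2
      nlinarith [sqrt2_le, Real.pi_lt_d2]
    have hmid_le : ∫ θ in t..(2*π - t), ‖psum n (zmap r θ)‖
        ≤ 4.8 * (2 * (2 + Real.log ((n:ℝ)+1))) := by
      rw [hmidval] at hmono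
      calc ∫ θ in t..(2*π - t), ‖psum n (zmap r θ)‖
          ≤ Real.sqrt 2 * π * (2 * Real.log ((2*π - t)/t)) := hmono
        _ ≤ 4.8 * (2 * (2 + Real.log ((n:ℝ)+1))) := by
            have hlog0 : 0 ≤ Real.log ((2*π - t)/t) := by
              apply Real.log_nonneg
              rw [le_div_iff₀ htpos]
              nlinarith
            have h1 : (0:ℝ) ≤ Real.sqrt 2 * π := by positivity
            nlinarith [hlogle]
    rw [hsplit]
    unfold Lw
    nlinarith [hend1, hend2, hmid_le, hlog]



lemma component_bound (c : ℕ → ℝ) (hanti : Antitone c) (hnn : ∀ n, 0 ≤ c n)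
    (hlim : Filter.Tendsto c Filter.atTop (nhds 0))
    (hS : Summable (fun n => c n / ((n:ℝ)+1)))
    (r : ℝ) (hr0 : 0 < r) (hr1 : r < 1) (s : ℝ → ℂ)
    (hs : ∀ θ : ℝ, HasSum (fun n : ℕ => (c n : ℂ) * (zmap r θ) ^ n) (s θ))
    (hsint : IntervalIntegrable (fun θ => ‖s θ‖) MeasureTheory.volume 0 (2*π)) :
    ∫ θ in (0:ℝ)..(2*π), ‖s θ‖ ≤ 25 * (c 0 + 2 * ∑' n, c n / ((n:ℝ)+1)) := by
  have hπ := Real.pi_pos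
  have hwn : ∀ θ : ℝ, ‖zmap r θ‖ = r := fun θ => zmap_norm r θ hr0.le
  have hsum25 := coef_summable c hanti hnn hS
  have hΔnn : ∀ n : ℕ, 0 ≤ c n - c (n+1) := fun n => sub_nonneg.2 (hanti (Nat.le_succ n))
  have key : ∀ N : ℕ, ∫ θ in (0:ℝ)..(2*π), ‖s θ‖
      ≤ 25 * (c 0 + 2 * ∑' n, c n / ((n:ℝ)+1)) + (2*π) * (2 * c N / (1-r)) := by
    intro N
    have hRHScont : ∀ (n : ℕ), IntervalIntegrable
        (fun θ : ℝ => (c n - c (n+1)) * ‖psum n (zmap r θ)‖) MeasureTheory.volume 0 (2*π) :=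
      fun n => (Continuous.intervalIntegrable (continuous_const.mul (psum_cont n r)) 0 (2*π))
    have step1 : ∫ θ in (0:ℝ)..(2*π), ‖s θ‖
        ≤ ∫ θ in (0:ℝ)..(2*π),
          ((∑ n ∈ Finset.range N, (c n - c (n+1)) * ‖psum n (zmap r θ)‖) + 2 * c N / (1-r)) := by
      apply intervalIntegral.integral_mono_on (by linarith) hsint
      · exact ((Continuous.add (continuous_finset_sum _
          (fun n _ => continuous_const.mul (psum_cont n r))) continuous_const).intervalIntegrable 0 (2*π))
      · intro θ _
        have := pointwise_bound c hanti hnn (w := zmap r θ) (by rw [hwn]; exact hr1)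
          (hs θ) N
        rwa [hwn] at this
    have step2 : ∫ θ in (0:ℝ)..(2*π),
          ((∑ n ∈ Finset.range N, (c n - c (n+1)) * ‖psum n (zmap r θ)‖) + 2 * c N / (1-r))
        = (∑ n ∈ Finset.range N, (c n - c (n+1)) * ∫ θ in (0:ℝ)..(2*π), ‖psum n (zmap r θ)‖)
          + (2*π) * (2 * c N / (1-r)) := by
      have hfin : IntervalIntegrable
          (fun θ : ℝ => ∑ n ∈ Finset.range N, (c n - c (n+1)) * ‖psum n (zmap r θ)‖)
          MeasureTheory.volume 0 (2*π) :=
        (continuous_finset_sum _ (fun n _ => continuous_const.mul (psum_cont n r))).intervalIntegrable _ _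
      rw [intervalIntegral.integral_add hfin intervalIntegrable_const]
      rw [intervalIntegral.integral_finset_sum (fun n _ => hRHScont n)]
      rw [intervalIntegral.integral_const, smul_eq_mul]
      congr 1
      · exact Finset.sum_congr rfl (fun n _ => intervalIntegral.integral_const_mul _ _)
      · ring
    have step3 : (∑ n ∈ Finset.range N, (c n - c (n+1)) * ∫ θ in (0:ℝ)..(2*π), ‖psum n (zmap r θ)‖)
        ≤ 25 * (c 0 + 2 * ∑' n, c n / ((n:ℝ)+1)) := by
      calc ∑ n ∈ Finset.range N, (c n - c (n+1)) * ∫ θ in (0:ℝ)..(2*π), ‖psum n (zmap r θ)‖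
          ≤ ∑ n ∈ Finset.range N, 25 * ((c n - c (n+1)) * Lw n) := by
            apply Finset.sum_le_sum; intro n _
            have := mul_le_mul_of_nonneg_left (ker_bound r hr0 hr1 n) (hΔnn n)
            calc (c n - c (n+1)) * ∫ θ in (0:ℝ)..(2*π), ‖psum n (zmap r θ)‖
                ≤ (c n - c (n+1)) * (25 * Lw n) := this
              _ = 25 * ((c n - c (n+1)) * Lw n) := by ring
        _ = 25 * ∑ n ∈ Finset.range N, (c n - c (n+1)) * Lw n := by rw [Finset.mul_sum]
        _ ≤ 25 * ∑' n, (c n - c (n+1)) * Lw n := by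
            apply mul_le_mul_of_nonneg_left _ (by norm_num : (0:ℝ) ≤ 25)
            exact Summable.sum_le_tsum _ (fun n _ => mul_nonneg (hΔnn n) (Lw_nonneg n)) hsum25
        _ ≤ 25 * (c 0 + 2 * ∑' n, c n / ((n:ℝ)+1)) := by
            apply mul_le_mul_of_nonneg_left (coef_tsum_le c hanti hnn hS) (by norm_num)
    calc ∫ θ in (0:ℝ)..(2*π), ‖s θ‖ ≤ _ := step1
      _ = _ := step2
      _ ≤ 25 * (c 0 + 2 * ∑' n, c n / ((n:ℝ)+1)) + (2*π) * (2 * c N / (1-r)) := by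
          exact add_le_add step3 le_rfl
  have htend : Filter.Tendsto
      (fun N : ℕ => 25 * (c 0 + 2 * ∑' n, c n / ((n:ℝ)+1)) + (2*π) * (2 * c N / (1-r)))
      Filter.atTop (nhds (25 * (c 0 + 2 * ∑' n, c n / ((n:ℝ)+1)) + (2*π) * (2 * 0 / (1-r)))) := by
    apply Filter.Tendsto.const_add
    apply Filter.Tendsto.const_mul
    apply Filter.Tendsto.div_const
    exact hlim.const_mul 2
  rw [show (2*π) * (2 * (0:ℝ) / (1-r)) = 0 by ring, add_zero] at htend
  exact ge_of_tendsto' htend key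

/-- Converse of Theorem 3.1 (iii): if `Σ (a_n + b_n)/(n+1) < ∞`, then `f ∈ h¹`. -/
theorem coeff_h1_converse (h g f : ℂ → ℂ) (a b : ℕ → ℝ)
    (hh : DifferentiableOn ℂ h unitDisk) (hg : DifferentiableOn ℂ g unitDisk)
    (hb0 : b 0 = 0)
    (ha_nonneg : ∀ n, 0 ≤ a n) (hb_nonneg : ∀ n, 0 ≤ b n)
    (ha_anti : Antitone a) (hb_anti : Antitone b)
    (ha_lim : Filter.Tendsto a Filter.atTop (nhds 0))
    (hb_lim : Filter.Tendsto b Filter.atTop (nhds 0))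
    (hha : ∀ z ∈ unitDisk, HasSum (fun n : ℕ => (a n : ℂ) * z ^ n) (h z))
    (hgb : ∀ z ∈ unitDisk, HasSum (fun n : ℕ => (b n : ℂ) * z ^ n) (g z))
    (hf : ∀ z ∈ unitDisk, f z = h z + (starRingEnd ℂ) (g z))
    (hsum : Summable (fun n : ℕ => (a n + b n) / ((n : ℝ) + 1))) :
    InHardy 1 f := by
  have hπ := Real.pi_pos
  -- summability of each part
  have haS : Summable (fun n : ℕ => a n / ((n:ℝ)+1)) := by
    apply Summable.of_nonneg_of_le (fun n => div_nonneg (ha_nonneg n) (by positivity))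
      (fun n => ?_) hsum
    apply div_le_div_of_nonneg_right ?_ ?_ |>.trans_eq rfl
    · linarith [hb_nonneg n]
    · positivity
  have hbS : Summable (fun n : ℕ => b n / ((n:ℝ)+1)) := by
    apply Summable.of_nonneg_of_le (fun n => div_nonneg (hb_nonneg n) (by positivity))
      (fun n => ?_) hsum
    apply div_le_div_of_nonneg_right ?_ ?_ |>.trans_eq rfl
    · linarith [ha_nonneg n]
    · positivity
  set Ca : ℝ := 25 * (a 0 + 2 * ∑' n, a n / ((n:ℝ)+1)) with hCa
  set Cb : ℝ := 25 * (b 0 + 2 * ∑' n, b n / ((n:ℝ)+1)) with hCb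
  refine ⟨(1/(2*π)) * (Ca + Cb), fun r hr0 hr1 => ?_⟩
  -- membership of the circle in the disk
  have hmem : ∀ θ : ℝ, zmap r θ ∈ unitDisk := by
    intro θ
    unfold unitDisk
    rw [Metric.mem_ball, dist_zero_right, zmap_norm r θ hr0.le]
    exact hr1
  have hzc : Continuous (zmap r) :=
    continuous_const.mul (Complex.continuous_exp.comp
      (Complex.continuous_ofReal.mul continuous_const))
  -- continuity of the three compositions
  have hhc : Continuous (fun θ : ℝ => h (zmap r θ)) :=
    (hh.continuousOn).comp_continuous hzc hmem
  have hgc : Continuous (fun θ : ℝ => g (zmap r θ)) :=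
    (hg.continuousOn).comp_continuous hzc hmem
  have hfc : Continuous (fun θ : ℝ => f (zmap r θ)) := by
    have hfeq : (fun θ : ℝ => f (zmap r θ))
        = fun θ : ℝ => h (zmap r θ) + (starRingEnd ℂ) (g (zmap r θ)) :=
      funext fun θ => hf _ (hmem θ)
    rw [hfeq]
    exact hhc.add (continuous_star.comp hgc)
  -- the two component bounds
  have hHa : ∫ θ in (0:ℝ)..(2*π), ‖h (zmap r θ)‖ ≤ Ca :=
    component_bound a ha_anti ha_nonneg ha_lim haS r hr0 hr1 _
      (fun θ => hha _ (hmem θ)) (hhc.norm.intervalIntegrable 0 (2*π))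
  have hHb : ∫ θ in (0:ℝ)..(2*π), ‖g (zmap r θ)‖ ≤ Cb :=
    component_bound b hb_anti hb_nonneg hb_lim hbS r hr0 hr1 _
      (fun θ => hgb _ (hmem θ)) (hgc.norm.intervalIntegrable 0 (2*π))
  have hfint : ∫ θ in (0:ℝ)..(2*π), ‖f (zmap r θ)‖ ≤ Ca + Cb := by
    have hmono : ∫ θ in (0:ℝ)..(2*π), ‖f (zmap r θ)‖
        ≤ ∫ θ in (0:ℝ)..(2*π), (‖h (zmap r θ)‖ + ‖g (zmap r θ)‖) := by
      apply intervalIntegral.integral_mono_on (by linarith)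
        (hfc.norm.intervalIntegrable 0 (2*π))
        ((hhc.norm.add hgc.norm).intervalIntegrable 0 (2*π))
      intro θ _
      rw [hf _ (hmem θ)]
      calc ‖h (zmap r θ) + (starRingEnd ℂ) (g (zmap r θ))‖
          ≤ ‖h (zmap r θ)‖ + ‖(starRingEnd ℂ) (g (zmap r θ))‖ := norm_add_le _ _
        _ = ‖h (zmap r θ)‖ + ‖g (zmap r θ)‖ := by rw [RCLike.norm_conj]
    rw [intervalIntegral.integral_add (hhc.norm.intervalIntegrable 0 (2*π))
      (hgc.norm.intervalIntegrable 0 (2*π))] at hmono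
    linarith
  -- conclude
  unfold circleMean
  rw [show (1:ℝ)/1 = 1 by norm_num, Real.rpow_one]
  have hsimp : ∀ θ : ℝ, ‖f (↑r * Complex.exp (↑θ * Complex.I))‖ ^ (1:ℝ)
      = ‖f (zmap r θ)‖ := by
    intro θ; rw [Real.rpow_one]; rfl
  rw [show (fun θ : ℝ => ‖f (↑r * Complex.exp (↑θ * Complex.I))‖ ^ (1:ℝ))
      = fun θ : ℝ => ‖f (zmap r θ)‖ from funext hsimp]
  exact mul_le_mul_of_nonneg_left hfint (by positivity)
end
end

section
/- Let h and g be analytic functions in the unit disk 𝔻, let f = h + conj(g), and let z ∈ 𝔻 be a point with f(z) ≠ 0. Then the Laplacian of |f| at z satisfies Δ(|f|)(z) = (|f(z)|²(|h'(z)|² + |g'(z)|²) − 2 Re(conj(h'(z)) g'(z) f(z)²)) / |f(z)|³, and consequently Δ(|f|)(z) ≤ (|h'(z)| + |g'(z)|)² / |f(z)|. -/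
open Complex Real Set

noncomputable section

/-- The Laplacian `Δφ = φ_xx + φ_yy` of a real-valued function on `ℂ ≃ ℝ²`. -/
def lap (φ : ℂ → ℝ) (z : ℂ) : ℝ :=
  deriv (fun x : ℝ => deriv (fun x' : ℝ => φ ((x' : ℂ) + (z.im : ℂ) * Complex.I)) x) z.re +
  deriv (fun y : ℝ => deriv (fun y' : ℝ => φ ((z.re : ℂ) + (y' : ℂ) * Complex.I)) y) z.im

/-- The partial derivative `u_x`. -/
def partialX (u : ℂ → ℝ) (z : ℂ) : ℝ :=
  deriv (fun x : ℝ => u ((x : ℂ) + (z.im : ℂ) * Complex.I)) z.re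

/-- The partial derivative `u_y`. -/
def partialY (u : ℂ → ℝ) (z : ℂ) : ℝ :=
  deriv (fun y : ℝ => u ((z.re : ℂ) + (y : ℂ) * Complex.I)) z.im

lemma hasDerivAt_conj' {F : ℝ → ℂ} {F' : ℂ} {t : ℝ} (hF : HasDerivAt F F' t) :
    HasDerivAt (fun s => (starRingEnd ℂ) (F s)) ((starRingEnd ℂ) F') t := by
  simpa [Function.comp_def] using ((Complex.conjCLE : ℂ ≃L[ℝ] ℂ).toContinuousLinearMap.hasFDerivAt.comp_hasDerivAt t hF)

lemma hasDerivAt_re' {F : ℝ → ℂ} {F' : ℂ} {t : ℝ} (hF : HasDerivAt F F' t) :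
    HasDerivAt (fun s => (F s).re) F'.re t := by
  simpa [Function.comp_def] using (Complex.reCLM.hasFDerivAt.comp_hasDerivAt t hF)

lemma hasDerivAt_im' {F : ℝ → ℂ} {F' : ℂ} {t : ℝ} (hF : HasDerivAt F F' t) :
    HasDerivAt (fun s => (F s).im) F'.im t := by
  simpa [Function.comp_def] using (Complex.imCLM.hasFDerivAt.comp_hasDerivAt t hF)

lemma hasDerivAt_norm' {F : ℝ → ℂ} {F' : ℂ} {t : ℝ} (hF : HasDerivAt F F' t) (h0 : F t ≠ 0) :
    HasDerivAt (fun s => ‖F s‖) (((starRingEnd ℂ) (F t) * F').re / ‖F t‖) t := by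
  have hns : HasDerivAt (fun s => Complex.normSq (F s))
      (2 * ((starRingEnd ℂ) (F t) * F').re) t := by
    have h2 := ((hasDerivAt_re' hF).mul (hasDerivAt_re' hF)).add
      ((hasDerivAt_im' hF).mul (hasDerivAt_im' hF))
    have e1 : (fun s => Complex.normSq (F s))
        = (fun s => (F s).re * (F s).re + (F s).im * (F s).im) := by
      funext s; simp [Complex.normSq_apply]
    rw [e1]
    convert h2 using 1
    · rfl
    · rfl
    · rfl
    simp [Complex.mul_re]; ring
  have h0' : Complex.normSq (F t) ≠ 0 := by simpa using h0
  have h3 := hns.sqrt h0'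
  have e2 : (fun s => ‖F s‖) = (fun s => Real.sqrt (Complex.normSq (F s))) := by
    funext s; rw [Complex.norm_def]
  rw [e2]
  convert h3 using 1
  rw [Complex.norm_def]
  have : Real.sqrt (Complex.normSq (F t)) ≠ 0 := by
    simpa [Real.sqrt_eq_zero'] using lt_of_le_of_ne (Complex.normSq_nonneg _) (Ne.symm h0')
  field_simp

lemma key_second_deriv {F F₁ : ℝ → ℂ} {F₂ : ℂ} {t₀ : ℝ}
    (hF : ∀ᶠ t in nhds t₀, HasDerivAt F (F₁ t) t ∧ F t ≠ 0)
    (hF₁ : HasDerivAt F₁ F₂ t₀) :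
    HasDerivAt (fun t => deriv (fun t' => ‖F t'‖) t)
      ((‖F₁ t₀‖ ^ 2 + ((starRingEnd ℂ) (F t₀) * F₂).re) / ‖F t₀‖
        - (((starRingEnd ℂ) (F t₀) * F₁ t₀).re) ^ 2 / ‖F t₀‖ ^ 3) t₀ := by
  obtain ⟨h1, h2⟩ := hF.self_of_nhds
  have hQ0 : ‖F t₀‖ ≠ 0 := norm_ne_zero_iff.mpr h2
  have hP : HasDerivAt (fun t => ((starRingEnd ℂ) (F t) * F₁ t).re)
      (‖F₁ t₀‖ ^ 2 + ((starRingEnd ℂ) (F t₀) * F₂).re) t₀ := by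
    have := hasDerivAt_re' ((hasDerivAt_conj' h1).mul hF₁)
    convert this using 1
    · rfl
    rw [Complex.add_re]
    congr 1
    rw [Complex.sq_norm, Complex.normSq_apply, Complex.mul_re,
      Complex.conj_re, Complex.conj_im]
    ring
  have hQ : HasDerivAt (fun t => ‖F t‖)
      (((starRingEnd ℂ) (F t₀) * F₁ t₀).re / ‖F t₀‖) t₀ := hasDerivAt_norm' h1 h2
  have hD := hP.div hQ hQ0
  have hev : (fun t => ((starRingEnd ℂ) (F t) * F₁ t).re / ‖F t‖)
      =ᶠ[nhds t₀] (fun t => deriv (fun t' => ‖F t'‖) t) :=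
    hF.mono fun t ht => ((hasDerivAt_norm' ht.1 ht.2).deriv).symm
  have hval : ∀ P' P r : ℝ, r ≠ 0 → (P' * r - P * (P / r)) / r ^ 2 = P' / r - P ^ 2 / r ^ 3 := by
    intro P' P r hr; field_simp
  have := hD.congr_of_eventuallyEq hev.symm
  rw [hval _ _ _ hQ0] at this
  exact this

lemma path_h' {φ : ℂ → ℂ} {φ' : ℂ} {c : ℝ} {t : ℝ} (hφ : HasDerivAt φ φ' (↑t + ↑c * I)) :
    HasDerivAt (fun s : ℝ => φ (↑s + ↑c * I)) φ' t := by
  have h1 : HasDerivAt (fun u : ℂ => φ (u + ↑c * I)) φ' ↑t := by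
    simpa [Function.comp_def] using hφ.comp (↑t : ℂ) ((hasDerivAt_id (↑t : ℂ)).add_const (↑c * I))
  exact h1.comp_ofReal

lemma path_v' {φ : ℂ → ℂ} {φ' : ℂ} {c : ℝ} {t : ℝ} (hφ : HasDerivAt φ φ' (↑c + ↑t * I)) :
    HasDerivAt (fun s : ℝ => φ (↑c + ↑s * I)) (φ' * I) t := by
  have h1 : HasDerivAt (fun u : ℂ => φ (↑c + u * I)) (φ' * I) ↑t := by
    simpa [Function.comp_def] using hφ.comp (↑t : ℂ) (((hasDerivAt_id (↑t : ℂ)).mul_const I).const_add (↑c : ℂ))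
  exact h1.comp_ofReal

/-- The Laplacian of `|f|` for a harmonic `f = h + conj g` at a point where `f ≠ 0`. -/
theorem laplacian_abs_f (h g f : ℂ → ℂ)
    (hh : DifferentiableOn ℂ h unitDisk) (hg : DifferentiableOn ℂ g unitDisk)
    (hf : ∀ z ∈ unitDisk, f z = h z + (starRingEnd ℂ) (g z))
    (z : ℂ) (hz : z ∈ unitDisk) (hfz : f z ≠ 0) :
    lap (fun w => ‖f w‖) z =
      (‖f z‖ ^ 2 * (‖deriv h z‖ ^ 2 + ‖deriv g z‖ ^ 2)
        - 2 * ((starRingEnd ℂ) (deriv h z) * deriv g z * f z ^ 2).re) / ‖f z‖ ^ 3 ∧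
    lap (fun w => ‖f w‖) z ≤ (‖deriv h z‖ + ‖deriv g z‖) ^ 2 / ‖f z‖ := by
  have hs : IsOpen unitDisk := Metric.isOpen_ball
  have hhA : AnalyticOnNhd ℂ h unitDisk := hh.analyticOnNhd hs
  have hgA : AnalyticOnNhd ℂ g unitDisk := hg.analyticOnNhd hs
  have hh' : ∀ w ∈ unitDisk, HasDerivAt h (deriv h w) w := fun w hw =>
    (hh.differentiableAt (hs.mem_nhds hw)).hasDerivAt
  have hg' : ∀ w ∈ unitDisk, HasDerivAt g (deriv g w) w := fun w hw =>
    (hg.differentiableAt (hs.mem_nhds hw)).hasDerivAt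
  have hh'' : HasDerivAt (deriv h) (deriv (deriv h) z) z :=
    ((hhA.deriv z hz).differentiableAt).hasDerivAt
  have hg'' : HasDerivAt (deriv g) (deriv (deriv g) z) z :=
    ((hgA.deriv z hz).differentiableAt).hasDerivAt
  have hfc : ContinuousOn f unitDisk := by
    have : ContinuousOn (fun w => h w + (starRingEnd ℂ) (g w)) unitDisk :=
      hh.continuousOn.add (Complex.continuous_conj.comp_continuousOn hg.continuousOn)
    exact this.congr fun w hw => hf w hw
  have hV : IsOpen {w | w ∈ unitDisk ∧ f w ≠ 0} := by
    have h1 := hfc.isOpen_inter_preimage hs (isOpen_compl_singleton (x := (0:ℂ)))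
    have h2 : {w | w ∈ unitDisk ∧ f w ≠ 0} = unitDisk ∩ f ⁻¹' {(0:ℂ)}ᶜ := by ext w; simp
    rw [h2]; exact h1
  have hzz : (↑z.re + ↑z.im * I : ℂ) = z := Complex.re_add_im z
  have hzV : z ∈ {w | w ∈ unitDisk ∧ f w ≠ 0} := ⟨hz, hfz⟩
  have hcontH : Continuous (fun t : ℝ => (↑t + ↑z.im * I : ℂ)) := by continuity
  have hcontV : Continuous (fun t : ℝ => (↑z.re + ↑t * I : ℂ)) := by continuity
  have hevH : ∀ᶠ t : ℝ in nhds z.re,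
      (((t:ℂ) + ↑z.im * I : ℂ) ∈ unitDisk ∧ f ((t:ℂ) + ↑z.im * I) ≠ 0) := by
    have := hcontH.continuousAt (x := z.re) |>.preimage_mem_nhds
      (by rw [hzz]; exact hV.mem_nhds hzV)
    exact this
  have hevV : ∀ᶠ t : ℝ in nhds z.im,
      (((z.re:ℂ) + (t:ℂ) * I : ℂ) ∈ unitDisk ∧ f ((z.re:ℂ) + (t:ℂ) * I) ≠ 0) := by
    have := hcontV.continuousAt (x := z.im) |>.preimage_mem_nhds
      (by rw [hzz]; exact hV.mem_nhds hzV)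
    exact this
  -- horizontal direction
  have hFh : ∀ᶠ t : ℝ in nhds z.re,
      HasDerivAt (fun t' : ℝ => f ((t':ℂ) + ↑z.im * I))
        ((fun t : ℝ => deriv h ((t:ℂ) + ↑z.im * I)
          + (starRingEnd ℂ) (deriv g ((t:ℂ) + ↑z.im * I))) t) t
      ∧ f ((t:ℂ) + ↑z.im * I) ≠ 0 := by
    filter_upwards [hevH] with t ht
    refine ⟨?_, ht.2⟩
    have hD : HasDerivAt (fun t' : ℝ => h ((t':ℂ) + ↑z.im * I)
        + (starRingEnd ℂ) (g ((t':ℂ) + ↑z.im * I)))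
        (deriv h ((t:ℂ) + ↑z.im * I) + (starRingEnd ℂ) (deriv g ((t:ℂ) + ↑z.im * I))) t :=
      (path_h' (hh' _ ht.1)).add (hasDerivAt_conj' (path_h' (hg' _ ht.1)))
    apply hD.congr_of_eventuallyEq
    have hmem : ∀ᶠ t' : ℝ in nhds t, ((t':ℂ) + ↑z.im * I) ∈ unitDisk :=
      hcontH.continuousAt.preimage_mem_nhds (hs.mem_nhds ht.1)
    filter_upwards [hmem] with t' ht' using hf _ ht'
  have hhz : HasDerivAt (deriv h) (deriv (deriv h) z) (↑z.re + ↑z.im * I) := by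
    rw [hzz]; exact hh''
  have hgz : HasDerivAt (deriv g) (deriv (deriv g) z) (↑z.re + ↑z.im * I) := by
    rw [hzz]; exact hg''
  have hF1h : HasDerivAt (fun t : ℝ => deriv h ((t:ℂ) + ↑z.im * I)
      + (starRingEnd ℂ) (deriv g ((t:ℂ) + ↑z.im * I)))
      (deriv (deriv h) z + (starRingEnd ℂ) (deriv (deriv g) z)) z.re :=
    (path_h' hhz).add (hasDerivAt_conj' (path_h' hgz))
  have Hx := key_second_deriv hFh hF1h
  -- vertical direction
  have hFv : ∀ᶠ t : ℝ in nhds z.im,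
      HasDerivAt (fun t' : ℝ => f ((z.re:ℂ) + (t':ℂ) * I))
        ((fun t : ℝ => deriv h ((z.re:ℂ) + (t:ℂ) * I) * I
          + (starRingEnd ℂ) (deriv g ((z.re:ℂ) + (t:ℂ) * I) * I)) t) t
      ∧ f ((z.re:ℂ) + (t:ℂ) * I) ≠ 0 := by
    filter_upwards [hevV] with t ht
    refine ⟨?_, ht.2⟩
    have hD : HasDerivAt (fun t' : ℝ => h ((z.re:ℂ) + (t':ℂ) * I)
        + (starRingEnd ℂ) (g ((z.re:ℂ) + (t':ℂ) * I)))
        (deriv h ((z.re:ℂ) + (t:ℂ) * I) * I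
          + (starRingEnd ℂ) (deriv g ((z.re:ℂ) + (t:ℂ) * I) * I)) t :=
      (path_v' (hh' _ ht.1)).add (hasDerivAt_conj' (path_v' (hg' _ ht.1)))
    apply hD.congr_of_eventuallyEq
    have hmem : ∀ᶠ t' : ℝ in nhds t, ((z.re:ℂ) + (t':ℂ) * I) ∈ unitDisk :=
      hcontV.continuousAt.preimage_mem_nhds (hs.mem_nhds ht.1)
    filter_upwards [hmem] with t' ht' using hf _ ht'
  have hF1v : HasDerivAt (fun t : ℝ => deriv h ((z.re:ℂ) + (t:ℂ) * I) * I
      + (starRingEnd ℂ) (deriv g ((z.re:ℂ) + (t:ℂ) * I) * I))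
      (deriv (deriv h) z * I * I + (starRingEnd ℂ) (deriv (deriv g) z * I * I)) z.im :=
    ((path_v' hhz).mul_const I).add
      (hasDerivAt_conj' ((path_v' hgz).mul_const I))
  have Hy := key_second_deriv hFv hF1v
  simp only [hzz] at Hx Hy
  have hlap : lap (fun w => ‖f w‖) z =
      ((‖deriv h z + (starRingEnd ℂ) (deriv g z)‖ ^ 2
          + ((starRingEnd ℂ) (f z) * (deriv (deriv h) z + (starRingEnd ℂ) (deriv (deriv g) z))).re) / ‖f z‖
        - (((starRingEnd ℂ) (f z) * (deriv h z + (starRingEnd ℂ) (deriv g z))).re) ^ 2 / ‖f z‖ ^ 3)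
      + ((‖deriv h z * I + (starRingEnd ℂ) (deriv g z * I)‖ ^ 2
          + ((starRingEnd ℂ) (f z) * (deriv (deriv h) z * I * I + (starRingEnd ℂ) (deriv (deriv g) z * I * I))).re) / ‖f z‖
        - (((starRingEnd ℂ) (f z) * (deriv h z * I + (starRingEnd ℂ) (deriv g z * I))).re) ^ 2 / ‖f z‖ ^ 3) := by
    simp only [lap]
    rw [Hx.deriv, Hy.deriv]
  have hr : (0:ℝ) < ‖f z‖ := norm_pos_iff.mpr hfz
  have hc : (0:ℝ) < (f z).re ^ 2 + (f z).im ^ 2 := by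
    have := Complex.normSq_pos.mpr hfz
    rw [Complex.normSq_apply] at this
    nlinarith
  have hn2 : ∀ w : ℂ, ‖w‖ ^ 2 = w.re ^ 2 + w.im ^ 2 := fun w => by
    rw [Complex.sq_norm, Complex.normSq_apply]; ring
  have h3 : ‖f z‖ ^ 3 = ((f z).re ^ 2 + (f z).im ^ 2) * ‖f z‖ := by
    rw [pow_succ, hn2]
  have heq : lap (fun w => ‖f w‖) z =
      (‖f z‖ ^ 2 * (‖deriv h z‖ ^ 2 + ‖deriv g z‖ ^ 2)
        - 2 * ((starRingEnd ℂ) (deriv h z) * deriv g z * f z ^ 2).re) / ‖f z‖ ^ 3 := by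
    have hrw : ∀ r p q u v : ℝ, r ≠ 0 → p / r - q / r ^ 3 + (u / r - v / r ^ 3)
        = ((p + u) * r ^ 2 - q - v) / r ^ 3 := by
      intro r p q u v hrne; field_simp; ring
    rw [hlap, hrw _ _ _ _ _ hr.ne']
    congr 1
    simp only [hn2]
    simp only [pow_two, Complex.mul_re, Complex.mul_im, Complex.add_re, Complex.add_im,
      Complex.conj_re, Complex.conj_im, Complex.I_re, Complex.I_im]
    ring
  refine ⟨heq, ?_⟩
  rw [heq]
  have hb : -(‖deriv h z‖ * ‖deriv g z‖ * ‖f z‖ ^ 2)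
      ≤ ((starRingEnd ℂ) (deriv h z) * deriv g z * f z ^ 2).re := by
    have h1 := neg_abs_le (((starRingEnd ℂ) (deriv h z) * deriv g z * f z ^ 2).re)
    have h2 : |((starRingEnd ℂ) (deriv h z) * deriv g z * f z ^ 2).re|
        ≤ ‖(starRingEnd ℂ) (deriv h z) * deriv g z * f z ^ 2‖ := Complex.abs_re_le_norm _
    have h4 : ‖(starRingEnd ℂ) (deriv h z) * deriv g z * f z ^ 2‖
        = ‖deriv h z‖ * ‖deriv g z‖ * ‖f z‖ ^ 2 := by
      rw [norm_mul, norm_mul, norm_pow, RCLike.norm_conj]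
    linarith
  rw [div_le_div_iff₀ (by positivity) hr]
  nlinarith [mul_nonneg hr.le (show (0:ℝ) ≤ ‖deriv h z‖ * ‖deriv g z‖ * ‖f z‖ ^ 2
    + ((starRingEnd ℂ) (deriv h z) * deriv g z * f z ^ 2).re from by linarith)]
end
end

section
/- Let K ≥ 1 and k = (K−1)/(K+1). Let f = h + conj(g) be a harmonic K-quasiregular mapping in the unit disk 𝔻 (h, g analytic, h'(z) ≠ 0 and |g'(z)| ≤ k|h'(z)| for all z ∈ 𝔻), and let u = Re f satisfy u(z) ≥ 1 for all z ∈ 𝔻. Then at every point z ∈ 𝔻 where f(z) ≠ 0, the pointwise inequality Δ(|f|)(z) ≤ K² · Δ(u log u)(z) holds. -/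
open Complex Real Set

noncomputable section

private lemma conj_mul_re' (z w : ℂ) :
    ((starRingEnd ℂ) z * w).re = z.re * w.re + z.im * w.im := by
  simp [Complex.mul_re]

private lemma norm_eq_sqrt' (z : ℂ) : ‖z‖ = Real.sqrt (z.re ^ 2 + z.im ^ 2) := by
  rw [Complex.norm_def, Complex.normSq_apply]
  ring_nf

private lemma norm_sq_eq' (z : ℂ) : ‖z‖ ^ 2 = z.re ^ 2 + z.im ^ 2 := by
  rw [Complex.sq_norm, Complex.normSq_apply]
  ring

private lemma hasDerivAt_norm_comp {p : ℝ → ℂ} {A : ℂ} {x : ℝ}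
    (hp : HasDerivAt p A x) (h0 : p x ≠ 0) :
    HasDerivAt (fun x' => ‖p x'‖) (((starRingEnd ℂ) (p x) * A).re / ‖p x‖) x := by
  have hre : HasDerivAt (fun x' => (p x').re) A.re x := by
    exact Complex.reCLM.hasFDerivAt.comp_hasDerivAt x hp
  have him : HasDerivAt (fun x' => (p x').im) A.im x := by
    exact Complex.imCLM.hasFDerivAt.comp_hasDerivAt x hp
  have hsq : HasDerivAt (fun x' => (p x').re ^ 2 + (p x').im ^ 2)
      (2 * (p x).re * A.re + 2 * (p x).im * A.im) x := by
    have h1 := (hre.pow 2).add (him.pow 2)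
    rw [show (2 * (p x).re * A.re + 2 * (p x).im * A.im) = ((2 : ℕ) * (p x).re ^ (2 - 1) * A.re
      + (2 : ℕ) * (p x).im ^ (2 - 1) * A.im) by norm_num]
    exact h1
  have hne : (p x).re ^ 2 + (p x).im ^ 2 ≠ 0 := by
    have h2 : ‖p x‖ ^ 2 ≠ 0 := pow_ne_zero _ (norm_ne_zero_iff.mpr h0)
    rwa [norm_sq_eq'] at h2
  have h3 := hsq.sqrt hne
  have hfun : (fun x' => ‖p x'‖) = fun x' => Real.sqrt ((p x').re ^ 2 + (p x').im ^ 2) :=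
    funext fun _ => norm_eq_sqrt' _
  rw [hfun]
  convert h3 using 1
  rw [conj_mul_re', norm_eq_sqrt']
  have hs : Real.sqrt ((p x).re ^ 2 + (p x).im ^ 2) ≠ 0 := by
    rw [← norm_eq_sqrt']
    exact norm_ne_zero_iff.mpr h0
  field_simp

private lemma lemA {p A : ℝ → ℂ} {B : ℂ} {t : ℝ} {s : Set ℝ} (hso : IsOpen s) (hts : t ∈ s)
    (hp : ∀ x ∈ s, HasDerivAt p (A x) x) (hp0 : ∀ x ∈ s, p x ≠ 0)
    (hA : HasDerivAt A B t) :
    deriv (fun x => deriv (fun x' : ℝ => ‖p x'‖) x) t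
      = (((starRingEnd ℂ) (p t) * B).re + ‖A t‖ ^ 2) / ‖p t‖
        - (((starRingEnd ℂ) (p t) * A t).re) ^ 2 / ‖p t‖ ^ 3 := by
  have hev : (fun x => deriv (fun x' : ℝ => ‖p x'‖) x)
      =ᶠ[nhds t] fun x => ((starRingEnd ℂ) (p x) * A x).re / ‖p x‖ := by
    filter_upwards [hso.mem_nhds hts] with x hx
    exact (hasDerivAt_norm_comp (hp x hx) (hp0 x hx)).deriv
  rw [hev.deriv_eq]
  have hpt : HasDerivAt p (A t) t := hp t hts
  have hstar : HasDerivAt (fun x => (starRingEnd ℂ) (p x)) ((starRingEnd ℂ) (A t)) t := by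
    simpa using hpt.star
  have hN : HasDerivAt (fun x => ((starRingEnd ℂ) (p x) * A x).re)
      (((starRingEnd ℂ) (A t) * A t + (starRingEnd ℂ) (p t) * B).re) t := by
    exact Complex.reCLM.hasFDerivAt.comp_hasDerivAt t (hstar.mul hA)
  have hD : HasDerivAt (fun x => ‖p x‖) (((starRingEnd ℂ) (p t) * A t).re / ‖p t‖) t :=
    hasDerivAt_norm_comp hpt (hp0 t hts)
  have hD0 : ‖p t‖ ≠ 0 := norm_ne_zero_iff.mpr (hp0 t hts)
  rw [show deriv (fun x => ((starRingEnd ℂ) (p x) * A x).re / ‖p x‖) t = _ from (hN.div hD hD0).deriv]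
  have hAA : ((starRingEnd ℂ) (A t) * A t).re = ‖A t‖ ^ 2 := by
    rw [norm_sq_eq', conj_mul_re']
    ring
  rw [Complex.add_re, hAA]
  generalize hDD : ‖p t‖ = D at hD0 ⊢
  field_simp
  ring

private lemma lemB {q A : ℝ → ℝ} {B : ℝ} {t : ℝ} {s : Set ℝ} (hso : IsOpen s) (hts : t ∈ s)
    (hq : ∀ x ∈ s, HasDerivAt q (A x) x) (hq0 : ∀ x ∈ s, 0 < q x)
    (hA : HasDerivAt A B t) :
    deriv (fun x => deriv (fun x' : ℝ => q x' * Real.log (q x')) x) t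
      = B * (Real.log (q t) + 1) + (A t) ^ 2 / q t := by
  have key : ∀ x ∈ s, HasDerivAt (fun x' => q x' * Real.log (q x'))
      (A x * (Real.log (q x) + 1)) x := by
    intro x hx
    have h1 := (hq x hx).mul ((hq x hx).log (hq0 x hx).ne')
    have h2 : A x * Real.log (q x) + q x * (A x / q x) = A x * (Real.log (q x) + 1) := by
      field_simp [(hq0 x hx).ne']
    rw [← h2]
    exact h1
  have hev : (fun x => deriv (fun x' : ℝ => q x' * Real.log (q x')) x)
      =ᶠ[nhds t] fun x => A x * (Real.log (q x) + 1) := by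
    filter_upwards [hso.mem_nhds hts] with x hx
    exact (key x hx).deriv
  rw [hev.deriv_eq]
  have h2 : HasDerivAt (fun x => A x * (Real.log (q x) + 1))
      (B * (Real.log (q t) + 1) + A t * (A t / q t)) t :=
    hA.mul (((hq t hts).log (hq0 t hts).ne').add_const 1)
  rw [h2.deriv]
  ring

private lemma hasDerivAt_lineX {F : ℂ → ℂ} {c : ℂ} {b x : ℝ}
    (hF : HasDerivAt F c ((x : ℂ) + (b : ℂ) * Complex.I)) :
    HasDerivAt (fun t : ℝ => F ((t : ℂ) + (b : ℂ) * Complex.I)) c x := by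
  have hl : HasDerivAt (fun t : ℝ => (t : ℂ) + (b : ℂ) * Complex.I) 1 x := by
    simpa using (Complex.ofRealCLM.hasDerivAt (x := x)).add_const ((b : ℂ) * Complex.I)
  have := hF.scomp x hl
  simp only [one_smul] at this
  exact this

private lemma hasDerivAt_lineY {F : ℂ → ℂ} {c : ℂ} {a y : ℝ}
    (hF : HasDerivAt F c ((a : ℂ) + (y : ℂ) * Complex.I)) :
    HasDerivAt (fun t : ℝ => F ((a : ℂ) + (t : ℂ) * Complex.I)) (Complex.I * c) y := by
  have hl : HasDerivAt (fun t : ℝ => (a : ℂ) + (t : ℂ) * Complex.I) Complex.I y := by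
    simpa using ((Complex.ofRealCLM.hasDerivAt (x := y)).mul_const Complex.I).const_add (a : ℂ)
  have := hF.scomp y hl
  simp only [smul_eq_mul] at this
  exact this

set_option maxHeartbeats 1000000 in
/-- The pointwise inequality `Δ|f| ≤ K² Δ(u log u)` for a harmonic `K`-quasiregular `f`
with `u = Re f ≥ 1`. -/
theorem laplacian_comparison (K : ℝ) (hK : 1 ≤ K) (h g f : ℂ → ℂ) (u : ℂ → ℝ)
    (hh : DifferentiableOn ℂ h unitDisk) (hg : DifferentiableOn ℂ g unitDisk)
    (hqr : ∀ z ∈ unitDisk,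
      deriv h z ≠ 0 ∧ ‖deriv g z‖ ≤ (K - 1) / (K + 1) * ‖deriv h z‖)
    (hf : ∀ z ∈ unitDisk, f z = h z + (starRingEnd ℂ) (g z))
    (hu : ∀ z, u z = (f z).re)
    (hu1 : ∀ z ∈ unitDisk, 1 ≤ u z) :
    ∀ z ∈ unitDisk, f z ≠ 0 →
      lap (fun w => ‖f w‖) z ≤ K ^ 2 * lap (fun w => u w * Real.log (u w)) z := by
  intro z hz hfz
  have hopen : IsOpen unitDisk := Metric.isOpen_ball
  have hhA : AnalyticOnNhd ℂ h unitDisk := hh.analyticOnNhd hopen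
  have hgA : AnalyticOnNhd ℂ g unitDisk := hg.analyticOnNhd hopen
  have hh' : AnalyticOnNhd ℂ (deriv h) unitDisk := hhA.deriv
  have hg' : AnalyticOnNhd ℂ (deriv g) unitDisk := hgA.deriv
  -- the open set V where everything is nice
  have hφc : ContinuousOn (fun w => h w + (starRingEnd ℂ) (g w)) unitDisk := by
    exact hh.continuousOn.add (Complex.continuous_conj.comp_continuousOn hg.continuousOn)
  set V : Set ℂ := unitDisk ∩ (fun w => h w + (starRingEnd ℂ) (g w)) ⁻¹' {0}ᶜ with hVdef
  have hVopen : IsOpen V := hφc.isOpen_inter_preimage hopen isOpen_compl_singleton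
  have hzV : z ∈ V := by
    refine ⟨hz, ?_⟩
    simp only [Set.mem_preimage, Set.mem_compl_iff, Set.mem_singleton_iff]
    rw [← hf z hz]
    exact hfz
  have hVd : ∀ w ∈ V, w ∈ unitDisk := fun w hw => hw.1
  have hVf : ∀ w ∈ V, f w ≠ 0 := by
    intro w hw
    rw [hf w hw.1]
    exact hw.2
  -- basic derivatives
  have dh : ∀ w ∈ V, HasDerivAt h (deriv h w) w := fun w hw =>
    (hh.differentiableAt (hopen.mem_nhds hw.1)).hasDerivAt
  have dg : ∀ w ∈ V, HasDerivAt g (deriv g w) w := fun w hw =>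
    (hg.differentiableAt (hopen.mem_nhds hw.1)).hasDerivAt
  have dh2 : HasDerivAt (deriv h) (deriv (deriv h) z) z := (hh' z hz).differentiableAt.hasDerivAt
  have dg2 : HasDerivAt (deriv g) (deriv (deriv g) z) z := (hg' z hz).differentiableAt.hasDerivAt
  have hzab : ((z.re : ℂ) + (z.im : ℂ) * Complex.I) = z := Complex.re_add_im z
  -- x-direction
  have hsxo : IsOpen ((fun x : ℝ => (x : ℂ) + (z.im : ℂ) * Complex.I) ⁻¹' V) := by
    apply hVopen.preimage
    fun_prop
  have haxm : z.re ∈ ((fun x : ℝ => (x : ℂ) + (z.im : ℂ) * Complex.I) ⁻¹' V) := by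
    simp only [Set.mem_preimage, hzab]
    exact hzV
  have hpx : ∀ x ∈ ((fun x : ℝ => (x : ℂ) + (z.im : ℂ) * Complex.I) ⁻¹' V),
      HasDerivAt (fun x' : ℝ => f ((x' : ℂ) + (z.im : ℂ) * Complex.I))
        (deriv h ((x : ℂ) + (z.im : ℂ) * Complex.I)
          + (starRingEnd ℂ) (deriv g ((x : ℂ) + (z.im : ℂ) * Complex.I))) x := by
    intro x hx
    have hw : ((x : ℂ) + (z.im : ℂ) * Complex.I) ∈ V := hx
    have h1 := hasDerivAt_lineX (dh _ hw)
    have h2 : HasDerivAt (fun t : ℝ => (starRingEnd ℂ) (g ((t : ℂ) + (z.im : ℂ) * Complex.I)))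
        ((starRingEnd ℂ) (deriv g ((x : ℂ) + (z.im : ℂ) * Complex.I))) x := by
      simpa using (hasDerivAt_lineX (dg _ hw)).star
    have h3 := h1.add h2
    apply h3.congr_of_eventuallyEq
    filter_upwards [hsxo.mem_nhds hx] with t ht
    exact hf _ (ht : _ ∈ V).1
  have hp0x : ∀ x ∈ ((fun x : ℝ => (x : ℂ) + (z.im : ℂ) * Complex.I) ⁻¹' V),
      f ((x : ℂ) + (z.im : ℂ) * Complex.I) ≠ 0 := fun x hx => hVf _ hx
  have hAx : HasDerivAt (fun x : ℝ => deriv h ((x : ℂ) + (z.im : ℂ) * Complex.I)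
        + (starRingEnd ℂ) (deriv g ((x : ℂ) + (z.im : ℂ) * Complex.I)))
      (deriv (deriv h) z + (starRingEnd ℂ) (deriv (deriv g) z)) z.re := by
    have dh2' : HasDerivAt (deriv h) (deriv (deriv h) z) ((z.re : ℂ) + (z.im : ℂ) * Complex.I) := by
      rw [hzab]; exact dh2
    have dg2' : HasDerivAt (deriv g) (deriv (deriv g) z) ((z.re : ℂ) + (z.im : ℂ) * Complex.I) := by
      rw [hzab]; exact dg2
    have h1 := hasDerivAt_lineX dh2'
    have h2 : HasDerivAt
        (fun t : ℝ => (starRingEnd ℂ) (deriv g ((t : ℂ) + (z.im : ℂ) * Complex.I)))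
        ((starRingEnd ℂ) (deriv (deriv g) z)) z.re := by
      simpa using (hasDerivAt_lineX dg2').star
    exact h1.add h2
  -- y-direction
  have hsyo : IsOpen ((fun y : ℝ => (z.re : ℂ) + (y : ℂ) * Complex.I) ⁻¹' V) := by
    apply hVopen.preimage
    fun_prop
  have haym : z.im ∈ ((fun y : ℝ => (z.re : ℂ) + (y : ℂ) * Complex.I) ⁻¹' V) := by
    simp only [Set.mem_preimage, hzab]
    exact hzV
  have hpy : ∀ y ∈ ((fun y : ℝ => (z.re : ℂ) + (y : ℂ) * Complex.I) ⁻¹' V),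
      HasDerivAt (fun y' : ℝ => f ((z.re : ℂ) + (y' : ℂ) * Complex.I))
        (Complex.I * deriv h ((z.re : ℂ) + (y : ℂ) * Complex.I)
          + (starRingEnd ℂ) (Complex.I * deriv g ((z.re : ℂ) + (y : ℂ) * Complex.I))) y := by
    intro y hy
    have hw : ((z.re : ℂ) + (y : ℂ) * Complex.I) ∈ V := hy
    have h1 := hasDerivAt_lineY (dh _ hw)
    have h2 : HasDerivAt
        (fun t : ℝ => (starRingEnd ℂ) (g ((z.re : ℂ) + (t : ℂ) * Complex.I)))
        ((starRingEnd ℂ) (Complex.I * deriv g ((z.re : ℂ) + (y : ℂ) * Complex.I))) y := by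
      simpa using (hasDerivAt_lineY (dg _ hw)).star
    have h3 := h1.add h2
    apply h3.congr_of_eventuallyEq
    filter_upwards [hsyo.mem_nhds hy] with t ht
    exact hf _ (ht : _ ∈ V).1
  have hp0y : ∀ y ∈ ((fun y : ℝ => (z.re : ℂ) + (y : ℂ) * Complex.I) ⁻¹' V),
      f ((z.re : ℂ) + (y : ℂ) * Complex.I) ≠ 0 := fun y hy => hVf _ hy
  have hAy : HasDerivAt (fun y : ℝ => Complex.I * deriv h ((z.re : ℂ) + (y : ℂ) * Complex.I)
        + (starRingEnd ℂ) (Complex.I * deriv g ((z.re : ℂ) + (y : ℂ) * Complex.I)))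
      (Complex.I * (Complex.I * deriv (deriv h) z)
        + (starRingEnd ℂ) (Complex.I * (Complex.I * deriv (deriv g) z))) z.im := by
    have dh2' : HasDerivAt (deriv h) (deriv (deriv h) z) ((z.re : ℂ) + (z.im : ℂ) * Complex.I) := by
      rw [hzab]; exact dh2
    have dg2' : HasDerivAt (deriv g) (deriv (deriv g) z) ((z.re : ℂ) + (z.im : ℂ) * Complex.I) := by
      rw [hzab]; exact dg2
    have h1 := (hasDerivAt_lineY dh2').const_mul Complex.I
    have h2 : HasDerivAt
        (fun t : ℝ => (starRingEnd ℂ) (Complex.I * deriv g ((z.re : ℂ) + (t : ℂ) * Complex.I)))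
        ((starRingEnd ℂ) (Complex.I * (Complex.I * deriv (deriv g) z))) z.im := by
      simpa using ((hasDerivAt_lineY dg2').const_mul Complex.I).star
    exact h1.add h2
  -- u along lines
  have hqx : ∀ x ∈ ((fun x : ℝ => (x : ℂ) + (z.im : ℂ) * Complex.I) ⁻¹' V),
      HasDerivAt (fun x' : ℝ => u ((x' : ℂ) + (z.im : ℂ) * Complex.I))
        ((deriv h ((x : ℂ) + (z.im : ℂ) * Complex.I)
          + (starRingEnd ℂ) (deriv g ((x : ℂ) + (z.im : ℂ) * Complex.I))).re) x := by
    intro x hx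
    have h1 := Complex.reCLM.hasFDerivAt.comp_hasDerivAt x (hpx x hx)
    simp only [Function.comp_def, Complex.reCLM_apply] at h1
    apply h1.congr_of_eventuallyEq
    filter_upwards with t
    exact hu _
  have hqx0 : ∀ x ∈ ((fun x : ℝ => (x : ℂ) + (z.im : ℂ) * Complex.I) ⁻¹' V),
      0 < u ((x : ℂ) + (z.im : ℂ) * Complex.I) := by
    intro x hx
    have := hu1 _ (hx : _ ∈ V).1
    linarith
  have hBx : HasDerivAt (fun x : ℝ => (deriv h ((x : ℂ) + (z.im : ℂ) * Complex.I)
        + (starRingEnd ℂ) (deriv g ((x : ℂ) + (z.im : ℂ) * Complex.I))).re)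
      ((deriv (deriv h) z + (starRingEnd ℂ) (deriv (deriv g) z)).re) z.re := by
    simpa only [Function.comp_def, Complex.reCLM_apply]
      using Complex.reCLM.hasFDerivAt.comp_hasDerivAt z.re hAx
  have hqy : ∀ y ∈ ((fun y : ℝ => (z.re : ℂ) + (y : ℂ) * Complex.I) ⁻¹' V),
      HasDerivAt (fun y' : ℝ => u ((z.re : ℂ) + (y' : ℂ) * Complex.I))
        ((Complex.I * deriv h ((z.re : ℂ) + (y : ℂ) * Complex.I)
          + (starRingEnd ℂ) (Complex.I * deriv g ((z.re : ℂ) + (y : ℂ) * Complex.I))).re) y := by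
    intro y hy
    have h1 := Complex.reCLM.hasFDerivAt.comp_hasDerivAt y (hpy y hy)
    simp only [Function.comp_def, Complex.reCLM_apply] at h1
    apply h1.congr_of_eventuallyEq
    filter_upwards with t
    exact hu _
  have hqy0 : ∀ y ∈ ((fun y : ℝ => (z.re : ℂ) + (y : ℂ) * Complex.I) ⁻¹' V),
      0 < u ((z.re : ℂ) + (y : ℂ) * Complex.I) := by
    intro y hy
    have := hu1 _ (hy : _ ∈ V).1
    linarith
  have hBy : HasDerivAt (fun y : ℝ => (Complex.I * deriv h ((z.re : ℂ) + (y : ℂ) * Complex.I)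
        + (starRingEnd ℂ) (Complex.I * deriv g ((z.re : ℂ) + (y : ℂ) * Complex.I))).re)
      ((Complex.I * (Complex.I * deriv (deriv h) z)
        + (starRingEnd ℂ) (Complex.I * (Complex.I * deriv (deriv g) z))).re) z.im := by
    simpa only [Function.comp_def, Complex.reCLM_apply]
      using Complex.reCLM.hasFDerivAt.comp_hasDerivAt z.im hAy
  -- apply the second-derivative formulas
  have HA1 := lemA hsxo haxm hpx hp0x hAx
  have HA2 := lemA hsyo haym hpy hp0y hAy
  have HB1 := lemB hsxo haxm hqx hqx0 hBx
  have HB2 := lemB hsyo haym hqy hqy0 hBy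
  rw [hzab] at HA1 HA2 HB1 HB2
  have egoalL : lap (fun w => ‖f w‖) z
      = deriv (fun x => deriv (fun x' : ℝ => ‖f ((x' : ℂ) + (z.im : ℂ) * Complex.I)‖) x) z.re
      + deriv (fun y => deriv (fun y' : ℝ => ‖f ((z.re : ℂ) + (y' : ℂ) * Complex.I)‖) y) z.im :=
    rfl
  have egoalR : lap (fun w => u w * Real.log (u w)) z
      = deriv (fun x => deriv (fun x' : ℝ =>
          u ((x' : ℂ) + (z.im : ℂ) * Complex.I)
            * Real.log (u ((x' : ℂ) + (z.im : ℂ) * Complex.I))) x) z.re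
      + deriv (fun y => deriv (fun y' : ℝ =>
          u ((z.re : ℂ) + (y' : ℂ) * Complex.I)
            * Real.log (u ((z.re : ℂ) + (y' : ℂ) * Complex.I))) y) z.im :=
    rfl
  rw [egoalL, egoalR, HA1, HA2, HB1, HB2]
  -- abbreviations
  set F := f z
  set H := deriv h z
  set G := deriv g z
  set H2 := deriv (deriv h) z
  set G2 := deriv (deriv g) z
  set R := ‖F‖ with hRdef
  set U := u z with hUdef
  have hR : (0 : ℝ) < R := norm_pos_iff.mpr hfz
  have hU1 : (1 : ℝ) ≤ U := hu1 z hz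
  have hU : (0 : ℝ) < U := by linarith
  have hUR : U ≤ R := by
    rw [hUdef, hu z, hRdef]
    exact Complex.re_le_norm F
  have hng : ‖G‖ ≤ (K - 1) / (K + 1) * ‖H‖ := (hqr z hz).2
  have hK1 : (0 : ℝ) < K + 1 := by linarith
  have hc1 : (0 : ℝ) ≤ (K - 1) * ‖H‖ - (K + 1) * ‖G‖ := by
    rw [div_mul_eq_mul_div, le_div_iff₀ hK1] at hng
    linarith
  have hnhg : ‖G‖ ≤ ‖H‖ := by
    nlinarith [norm_nonneg G, norm_nonneg H]
  -- key identities
  have E1 : ((starRingEnd ℂ) F * (H2 + (starRingEnd ℂ) G2)).re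
      + ((starRingEnd ℂ) F * (Complex.I * (Complex.I * H2)
        + (starRingEnd ℂ) (Complex.I * (Complex.I * G2)))).re = 0 := by
    simp only [Complex.mul_re, Complex.mul_im, Complex.add_re, Complex.add_im,
      Complex.conj_re, Complex.conj_im, Complex.I_re, Complex.I_im]
    ring
  have E1' : (H2 + (starRingEnd ℂ) G2).re
      + (Complex.I * (Complex.I * H2) + (starRingEnd ℂ) (Complex.I * (Complex.I * G2))).re = 0 := by
    simp only [Complex.mul_re, Complex.mul_im, Complex.add_re, Complex.add_im,
      Complex.conj_re, Complex.conj_im, Complex.I_re, Complex.I_im]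
    ring
  have E2 : ‖H + (starRingEnd ℂ) G‖ ^ 2 + ‖Complex.I * H + (starRingEnd ℂ) (Complex.I * G)‖ ^ 2
      = 2 * (‖H‖ ^ 2 + ‖G‖ ^ 2) := by
    simp only [norm_sq_eq', Complex.mul_re, Complex.mul_im, Complex.add_re, Complex.add_im,
      Complex.conj_re, Complex.conj_im, Complex.I_re, Complex.I_im]
    ring
  have E3 : (((starRingEnd ℂ) F * (H + (starRingEnd ℂ) G)).re) ^ 2
      + (((starRingEnd ℂ) F * (Complex.I * H + (starRingEnd ℂ) (Complex.I * G))).re) ^ 2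
      = ‖(starRingEnd ℂ) F * H + F * G‖ ^ 2 := by
    simp only [norm_sq_eq', Complex.mul_re, Complex.mul_im, Complex.add_re, Complex.add_im,
      Complex.conj_re, Complex.conj_im, Complex.I_re, Complex.I_im]
    ring
  have E4 : ((H + (starRingEnd ℂ) G).re) ^ 2
      + ((Complex.I * H + (starRingEnd ℂ) (Complex.I * G)).re) ^ 2 = ‖H + G‖ ^ 2 := by
    simp only [norm_sq_eq', Complex.mul_re, Complex.mul_im, Complex.add_re, Complex.add_im,
      Complex.conj_re, Complex.conj_im, Complex.I_re, Complex.I_im]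
    ring
  -- lower bound for the quadratic term
  have Ineq5 : R * (‖H‖ - ‖G‖) ≤ ‖(starRingEnd ℂ) F * H + F * G‖ := by
    have h5 := norm_le_add_norm_add ((starRingEnd ℂ) F * H) (F * G)
    have h6 : ‖(starRingEnd ℂ) F * H‖ = R * ‖H‖ := by
      rw [norm_mul, RCLike.norm_conj]
    have h7 : ‖F * G‖ = R * ‖G‖ := by rw [norm_mul]
    rw [h6, h7] at h5
    linarith
  have Ineq6 : R ^ 2 * (‖H‖ - ‖G‖) ^ 2 ≤ ‖(starRingEnd ℂ) F * H + F * G‖ ^ 2 := by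
    have h8 : (0 : ℝ) ≤ R * (‖H‖ - ‖G‖) := mul_nonneg hR.le (by linarith)
    calc R ^ 2 * (‖H‖ - ‖G‖) ^ 2 = (R * (‖H‖ - ‖G‖)) ^ 2 := by ring
      _ ≤ ‖(starRingEnd ℂ) F * H + F * G‖ ^ 2 := by
          exact pow_le_pow_left₀ h8 Ineq5 2
  have Ineq7 : (‖H‖ - ‖G‖) ^ 2 ≤ ‖H + G‖ ^ 2 := by
    have h9 : ‖H‖ ≤ ‖H + G‖ + ‖G‖ := norm_le_add_norm_add H G
    nlinarith [norm_nonneg (H + G), norm_nonneg G]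
  have hKey : (‖H‖ + ‖G‖) ^ 2 ≤ K ^ 2 * (‖H‖ - ‖G‖) ^ 2 := by
    have hc2 : (0 : ℝ) ≤ (K + 1) * ‖H‖ - (K - 1) * ‖G‖ := by
      nlinarith [norm_nonneg G, norm_nonneg H]
    nlinarith [mul_nonneg hc1 hc2]
  -- final computation
  have LF : (((starRingEnd ℂ) F * (H2 + (starRingEnd ℂ) G2)).re
        + ‖H + (starRingEnd ℂ) G‖ ^ 2) / R
      - (((starRingEnd ℂ) F * (H + (starRingEnd ℂ) G)).re) ^ 2 / R ^ 3
      + ((((starRingEnd ℂ) F * (Complex.I * (Complex.I * H2)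
          + (starRingEnd ℂ) (Complex.I * (Complex.I * G2)))).re
        + ‖Complex.I * H + (starRingEnd ℂ) (Complex.I * G)‖ ^ 2) / R
      - (((starRingEnd ℂ) F * (Complex.I * H + (starRingEnd ℂ) (Complex.I * G))).re) ^ 2 / R ^ 3)
      = 2 * (‖H‖ ^ 2 + ‖G‖ ^ 2) / R - ‖(starRingEnd ℂ) F * H + F * G‖ ^ 2 / R ^ 3 := by
    linear_combination E1 / R + E2 / R - E3 / R ^ 3
  have LU : (H2 + (starRingEnd ℂ) G2).re * (Real.log U + 1)
      + ((H + (starRingEnd ℂ) G).re) ^ 2 / U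
      + ((Complex.I * (Complex.I * H2) + (starRingEnd ℂ) (Complex.I * (Complex.I * G2))).re
          * (Real.log U + 1)
        + ((Complex.I * H + (starRingEnd ℂ) (Complex.I * G)).re) ^ 2 / U)
      = ‖H + G‖ ^ 2 / U := by
    linear_combination (Real.log U + 1) * E1' + E4 / U
  rw [LF, LU]
  have step1 : 2 * (‖H‖ ^ 2 + ‖G‖ ^ 2) / R - ‖(starRingEnd ℂ) F * H + F * G‖ ^ 2 / R ^ 3
      ≤ (‖H‖ + ‖G‖) ^ 2 / R := by
    have h10 : R ^ 2 * (‖H‖ - ‖G‖) ^ 2 / R ^ 3 ≤ ‖(starRingEnd ℂ) F * H + F * G‖ ^ 2 / R ^ 3 := by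
      gcongr
    have h11 : R ^ 2 * (‖H‖ - ‖G‖) ^ 2 / R ^ 3 = (‖H‖ - ‖G‖) ^ 2 / R := by
      field_simp
    have h12 : 2 * (‖H‖ ^ 2 + ‖G‖ ^ 2) / R = (‖H‖ + ‖G‖) ^ 2 / R + (‖H‖ - ‖G‖) ^ 2 / R := by
      field_simp
      ring
    linarith
  calc 2 * (‖H‖ ^ 2 + ‖G‖ ^ 2) / R - ‖(starRingEnd ℂ) F * H + F * G‖ ^ 2 / R ^ 3
      ≤ (‖H‖ + ‖G‖) ^ 2 / R := step1
    _ ≤ K ^ 2 * (‖H‖ - ‖G‖) ^ 2 / R := by gcongr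
    _ ≤ K ^ 2 * (‖H‖ - ‖G‖) ^ 2 / U := by
        gcongr
    _ ≤ K ^ 2 * (‖H + G‖ ^ 2 / U) := by
        rw [mul_div_assoc]
        gcongr
end
end
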